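/- arXiv:2209.11852 — 9 statements merged into one kernel-verified Lean document; each statement's English description precedes it below -/
import Mathlib

section
/- Consider a birth-death chain on the nonnegative integers absorbed at 0, with up-probability p₁ = 2λ/(1+3λ) from state 1 and up-probability p = λ/(1+λ) from every state k ≥ 2, where λ > 1. Then the probability of never being absorbed, starting from state 1, equals 2(λ-1)/(3λ-1). -/
/-!
From every state `k ≥ 2` the harmonic equation reads `(1 + λ) h k = λ h (k + 1) + h (k - 1)`,
whose solutions are `A + B λ⁻ᵏ`. A nonnegative solution has a nonnegative limit `A`, which
amounts to `h 1 ≤ λ h 2`; inserted into the equation at state 1 this gives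
`h 1 ≥ (1 + λ) / (3λ - 1)`. Conversely `k ↦ (1 + λ) / (3λ - 1) · λ¹⁻ᵏ` is a nonnegative
solution, so by minimality `h 1` is exactly that value.
-/

open Filter Topology

lemma eq_add_mul_inv_pow_of_recurrence {lam : ℝ} (hlam : lam ≠ 1) (hlam0 : lam ≠ 0)
    {u : ℕ → ℝ} (hu : ∀ n, (1 + lam) * u (n + 1) = lam * u (n + 2) + u n) (n : ℕ) :
    u n = (lam * u 1 - u 0) / (lam - 1) + (u 0 - u 1) * lam / (lam - 1) * lam⁻¹ ^ n := by
  have hlam1 : lam - 1 ≠ 0 := sub_ne_zero.2 hlam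
  induction n using Nat.twoStepInduction with
  | zero => field_simp; ring
  | one => field_simp; ring
  | more n ih₀ ih₁ =>
    have hnext : u (n + 2) = ((1 + lam) * u (n + 1) - u n) / lam := by
      rw [eq_div_iff hlam0]; linarith [hu n]
    rw [hnext, ih₀, ih₁]
    simp only [inv_pow]
    field_simp
    ring

lemma le_mul_of_recurrence_of_nonneg {lam : ℝ} (hlam : 1 < lam) {u : ℕ → ℝ}
    (hu : ∀ n, (1 + lam) * u (n + 1) = lam * u (n + 2) + u n) (hnonneg : ∀ n, 0 ≤ u n) :
    u 0 ≤ lam * u 1 := by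
  have hlim : Tendsto u atTop (𝓝 ((lam * u 1 - u 0) / (lam - 1))) := by
    have hpow := tendsto_pow_atTop_nhds_zero_of_lt_one (inv_nonneg.2 (by linarith))
      (inv_lt_one_of_one_lt₀ hlam)
    have := (hpow.const_mul ((u 0 - u 1) * lam / (lam - 1))).const_add
      ((lam * u 1 - u 0) / (lam - 1))
    rw [mul_zero, add_zero] at this
    exact this.congr fun n =>
      (eq_add_mul_inv_pow_of_recurrence hlam.ne' (by positivity) hu n).symm
  have hA : 0 ≤ (lam * u 1 - u 0) / (lam - 1) := ge_of_tendsto' hlim hnonneg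
  rw [le_div_iff₀ (by linarith), zero_mul] at hA
  linarith

section Chain

variable {lam : ℝ} {p h : ℕ → ℝ}

lemma harmonic_at_tail (hlam : 0 < lam) (hpk : ∀ k, 2 ≤ k → p k = lam / (1 + lam))
    (hrec : ∀ k, 1 ≤ k → h k = p k * h (k + 1) + (1 - p k) * h (k - 1)) (n : ℕ) :
    (1 + lam) * h (n + 2) = lam * h (n + 3) + h (n + 1) := by
  have e := hrec (n + 2) (by omega)
  rw [hpk (n + 2) (by omega), show n + 2 - 1 = n + 1 from rfl] at e
  field_simp at e
  linarith

lemma harmonic_at_one (hlam : 0 < lam) (hp1 : p 1 = 2 * lam / (1 + 3 * lam)) (h0 : h 0 = 1)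
    (hrec : ∀ k, 1 ≤ k → h k = p k * h (k + 1) + (1 - p k) * h (k - 1)) :
    (1 + 3 * lam) * h 1 = 2 * lam * h 2 + (1 + lam) := by
  have e := hrec 1 le_rfl
  rw [show (1 : ℕ) - 1 = 0 from rfl, hp1, h0] at e
  field_simp at e
  linarith

lemma div_le_of_harmonic_of_nonneg (hlam : 1 < lam) (hp1 : p 1 = 2 * lam / (1 + 3 * lam))
    (hpk : ∀ k, 2 ≤ k → p k = lam / (1 + lam)) (h0 : h 0 = 1)
    (hrec : ∀ k, 1 ≤ k → h k = p k * h (k + 1) + (1 - p k) * h (k - 1))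
    (hnonneg : ∀ k, 0 ≤ h k) :
    (1 + lam) / (3 * lam - 1) ≤ h 1 := by
  have htail : h 1 ≤ lam * h 2 :=
    le_mul_of_recurrence_of_nonneg (u := fun n => h (n + 1)) hlam
      (harmonic_at_tail (by linarith) hpk hrec) fun n => hnonneg (n + 1)
  have hone := harmonic_at_one (by linarith) hp1 h0 hrec
  rw [div_le_iff₀ (by linarith)]
  linarith

end Chain

noncomputable def absorptionProb (lam : ℝ) : ℕ → ℝ
  | 0 => 1
  | k + 1 => (1 + lam) / (3 * lam - 1) / lam ^ k

lemma absorptionProb_nonneg {lam : ℝ} (hlam : 1 < lam) (k : ℕ) : 0 ≤ absorptionProb lam k := by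
  cases k with
  | zero => exact zero_le_one
  | succ k =>
    have : 0 < 3 * lam - 1 := by linarith
    have : 0 < lam := by linarith
    unfold absorptionProb
    positivity

lemma absorptionProb_harmonic {lam : ℝ} (hlam : 1 < lam) {p : ℕ → ℝ}
    (hp1 : p 1 = 2 * lam / (1 + 3 * lam)) (hpk : ∀ k, 2 ≤ k → p k = lam / (1 + lam))
    (k : ℕ) (hk : 1 ≤ k) :
    absorptionProb lam k =
      p k * absorptionProb lam (k + 1) + (1 - p k) * absorptionProb lam (k - 1) := by
  have h3 : lam * 3 - 1 ≠ 0 := by linarith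
  have h0 : lam ≠ 0 := by linarith
  obtain _ | _ | m := k
  · omega
  · simp only [absorptionProb, hp1, zero_add, Nat.sub_self, pow_zero, div_one, pow_one, mul_one]
    field_simp
    ring
  · simp only [absorptionProb, hpk (m + 2) (by omega), Nat.add_sub_cancel]
    field_simp
    ring

/-- For the birth-death chain on ℕ absorbed at 0 with up-probability `2λ/(1+3λ)` from
state 1 and `λ/(1+λ)` from every state `k ≥ 2` (λ > 1), the survival probability from
state 1 (one minus the absorption probability, the latter characterized as the minimal
nonnegative solution of the harmonic equations with boundary value 1 at 0) equals
`2(λ-1)/(3λ-1)`. -/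
theorem stmt_1 (lam : ℝ) (hlam : 1 < lam)
    (p : ℕ → ℝ) (hp1 : p 1 = 2 * lam / (1 + 3 * lam))
    (hpk : ∀ k, 2 ≤ k → p k = lam / (1 + lam))
    (h : ℕ → ℝ)
    (h0 : h 0 = 1)
    (hrec : ∀ k, 1 ≤ k → h k = p k * h (k + 1) + (1 - p k) * h (k - 1))
    (hnonneg : ∀ k, 0 ≤ h k)
    (hmin : ∀ g : ℕ → ℝ, g 0 = 1 →
      (∀ k, 1 ≤ k → g k = p k * g (k + 1) + (1 - p k) * g (k - 1)) →
      (∀ k, 0 ≤ g k) → ∀ k, h k ≤ g k) :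
    1 - h 1 = 2 * (lam - 1) / (3 * lam - 1) := by
  have hupper : h 1 ≤ (1 + lam) / (3 * lam - 1) := by
    simpa [absorptionProb] using hmin (absorptionProb lam) rfl
      (absorptionProb_harmonic hlam hp1 hpk) (absorptionProb_nonneg hlam) 1
  have hh1 : h 1 = (1 + lam) / (3 * lam - 1) :=
    le_antisymm hupper (div_le_of_harmonic_of_nonneg hlam hp1 hpk h0 hrec hnonneg)
  rw [hh1, eq_div_iff (by linarith), sub_mul, div_mul_cancel₀ _ (by linarith)]
  ring
end

section
/- The unique solution (ν₁, …, ν_{2d}) of the triangular linear system i/(i + (2d−i)λ) = Σ_{k=1}^{i} C(i,k) ν_k for i = 1, …, 2d is given by ν_j = j!(λ−1)^{j−1} / ∏_{k=1}^{j} (k + (2d−k)λ). -/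
/-!
Write `x = λ - 1` and `A = 2dλ`; for `k ≤ 2d` the denominators are `k + (2d - k)λ = A - kx`, an
arithmetic progression. For such a progression the candidate solution satisfies the `i`-th equation
because its partial sums telescope: the sum of the first `n` terms falls short of `i / (A - ix)` by
`i(i-1)⋯(i-n) xⁿ / ((A - x)⋯(A - nx)(A - ix))`, which vanishes at `n = i`. Uniqueness holds because
the system is triangular with diagonal coefficients `C(i,i) = 1`.
-/

open Finset Nat

theorem eq_of_forall_sum_Icc_mul_eq {K : Type*} [Field K] {a : ℕ → ℕ → K}
    (ha : ∀ i, a i i ≠ 0) {N : ℕ} {ν μ : ℕ → K}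
    (h : ∀ i, 1 ≤ i → i ≤ N → ∑ k ∈ Icc 1 i, a i k * ν k = ∑ k ∈ Icc 1 i, a i k * μ k) :
    ∀ j, 1 ≤ j → j ≤ N → ν j = μ j := by
  intro j
  induction j using Nat.strong_induction_on with
  | _ j ih =>
    intro hj1 hjN
    obtain ⟨m, rfl⟩ : ∃ m, j = m + 1 := ⟨j - 1, by omega⟩
    have hlower : ∑ k ∈ Icc 1 m, a (m + 1) k * ν k = ∑ k ∈ Icc 1 m, a (m + 1) k * μ k :=
      sum_congr rfl fun k hk => by
        obtain ⟨hk1, hkm⟩ := mem_Icc.mp hk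
        rw [ih k (by omega) hk1 (by omega)]
    have htop := h (m + 1) hj1 hjN
    rw [sum_Icc_succ_top (by omega), sum_Icc_succ_top (by omega), hlower] at htop
    exact mul_left_cancel₀ (ha (m + 1)) (add_left_cancel htop)

section ArithmeticProgression

variable {K : Type*} [Field K] (A x : K)

theorem sum_Icc_choose_mul_factorial_div_prod_sub_partial {i n : ℕ} (hn : n ≤ i)
    (hA : ∀ m ∈ Icc 1 i, A - m * x ≠ 0) :
    ∑ k ∈ Icc 1 n, (i.choose k : K) * (k ! * x ^ (k - 1) / ∏ m ∈ Icc 1 k, (A - m * x)) =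
      i / (A - i * x) -
        i.descFactorial (n + 1) * x ^ n / ((∏ m ∈ Icc 1 n, (A - m * x)) * (A - i * x)) := by
  induction n with
  | zero => simp
  | succ n ih =>
    have hAi : A - i * x ≠ 0 := hA i (mem_Icc.mpr ⟨by omega, le_rfl⟩)
    have hAn : A - (n + 1 : ℕ) * x ≠ 0 := hA (n + 1) (mem_Icc.mpr ⟨by omega, hn⟩)
    have hP : ∏ m ∈ Icc 1 n, (A - m * x) ≠ 0 :=
      prod_ne_zero_iff.mpr fun m hm =>
        hA m (mem_Icc.mpr ⟨(mem_Icc.mp hm).1, (mem_Icc.mp hm).2.trans (by omega)⟩)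
    have hdesc : (i.descFactorial (n + 2) : K) = (i - (n + 1 : ℕ)) * i.descFactorial (n + 1) := by
      rw [Nat.descFactorial_succ, Nat.cast_mul, Nat.cast_sub hn]
    have hchoose : (i.choose (n + 1) : K) * (n + 1) ! = i.descFactorial (n + 1) := by
      rw [Nat.descFactorial_eq_factorial_mul_choose, Nat.cast_mul, mul_comm]
    rw [sum_Icc_succ_top (by omega), ih (by omega), prod_Icc_succ_top (by omega), hdesc,
      Nat.add_sub_cancel, ← hchoose]
    generalize ∏ m ∈ Icc 1 n, (A - m * x) = P at hP ⊢
    generalize hB : A - ((n + 1 : ℕ) : K) * x = B at hAn ⊢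
    field_simp
    rw [← hB]
    push_cast
    ring

theorem sum_Icc_choose_mul_factorial_div_prod_sub (i : ℕ)
    (hA : ∀ m ∈ Icc 1 i, A - m * x ≠ 0) :
    ∑ k ∈ Icc 1 i, (i.choose k : K) * (k ! * x ^ (k - 1) / ∏ m ∈ Icc 1 k, (A - m * x)) =
      i / (A - i * x) := by
  rw [sum_Icc_choose_mul_factorial_div_prod_sub_partial A x le_rfl hA,
    Nat.descFactorial_of_lt (Nat.lt_succ_self i)]
  simp

end ArithmeticProgression

theorem natCast_add_natCast_sub_mul_eq {N k : ℕ} (hk : k ≤ N) (lam : ℝ) :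
    (k : ℝ) + ((N - k : ℕ) : ℝ) * lam = N * lam - k * (lam - 1) := by
  rw [Nat.cast_sub hk]
  ring

theorem sum_Icc_choose_mul_factorial_div_prod_add_sub_mul {N i : ℕ} (hi : i ≤ N) {lam : ℝ}
    (hlam : 0 ≤ lam) :
    ∑ k ∈ Icc 1 i, (i.choose k : ℝ) * ((k ! : ℝ) * (lam - 1) ^ (k - 1) /
      ∏ m ∈ Icc 1 k, ((m : ℝ) + ((N - m : ℕ) : ℝ) * lam)) =
      i / ((i : ℝ) + ((N - i : ℕ) : ℝ) * lam) := by
  have hform : ∀ m ≤ i, (m : ℝ) + ((N - m : ℕ) : ℝ) * lam = N * lam - m * (lam - 1) :=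
    fun m hm => natCast_add_natCast_sub_mul_eq (hm.trans hi) lam
  have hpos : ∀ m ∈ Icc 1 i, (0 : ℝ) < (m : ℝ) + ((N - m : ℕ) : ℝ) * lam := by
    intro m hm
    have : (1 : ℝ) ≤ m := by exact_mod_cast (mem_Icc.mp hm).1
    positivity
  rw [hform i le_rfl, ← sum_Icc_choose_mul_factorial_div_prod_sub _ _ i fun m hm => by
    rw [← hform m (mem_Icc.mp hm).2]; exact (hpos m hm).ne']
  refine sum_congr rfl fun k hk => ?_
  rw [prod_congr rfl fun m hm => hform m ((mem_Icc.mp hm).2.trans (mem_Icc.mp hk).2)]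

theorem stmt_3_general (d : ℕ) (lam : ℝ) (hlam : 1 < lam) (ν : ℕ → ℝ) :
    (∀ i, 1 ≤ i → i ≤ 2 * d →
      (i : ℝ) / ((i : ℝ) + ((2 * d - i : ℕ) : ℝ) * lam) =
        ∑ k ∈ Finset.Icc 1 i, (Nat.choose i k : ℝ) * ν k) ↔
    (∀ j, 1 ≤ j → j ≤ 2 * d →
      ν j = (Nat.factorial j : ℝ) * (lam - 1) ^ (j - 1) /
        ∏ k ∈ Finset.Icc 1 j, ((k : ℝ) + ((2 * d - k : ℕ) : ℝ) * lam)) := by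
  have hsolution (i : ℕ) (hi : i ≤ 2 * d) :=
    sum_Icc_choose_mul_factorial_div_prod_add_sub_mul hi (zero_le_one.trans hlam.le)
  constructor
  · refine fun h => eq_of_forall_sum_Icc_mul_eq (a := fun i k => (i.choose k : ℝ)) (by simp) ?_
    intro i hi1 hi2
    rw [← h i hi1 hi2, hsolution i hi2]
  · intro h i hi1 hi2
    rw [← hsolution i hi2]
    exact sum_congr rfl fun k hk => by rw [h k (mem_Icc.mp hk).1 ((mem_Icc.mp hk).2.trans hi2)]

/-- The unique solution of the triangular linear system
`i/(i+(2d−i)λ) = Σ_{k=1}^{i} C(i,k) ν_k`, `i = 1, …, 2d`, is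
`ν_j = j!(λ−1)^{j−1} / ∏_{k=1}^{j} (k+(2d−k)λ)`. -/
theorem stmt_3 (d : ℕ) (hd : 1 ≤ d) (lam : ℝ) (hlam : 1 < lam) (ν : ℕ → ℝ) :
    (∀ i, 1 ≤ i → i ≤ 2 * d →
      (i : ℝ) / ((i : ℝ) + ((2 * d - i : ℕ) : ℝ) * lam) =
        ∑ k ∈ Finset.Icc 1 i, (Nat.choose i k : ℝ) * ν k) ↔
    (∀ j, 1 ≤ j → j ≤ 2 * d →
      ν j = (Nat.factorial j : ℝ) * (lam - 1) ^ (j - 1) /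
        ∏ k ∈ Finset.Icc 1 j, ((k : ℝ) + ((2 * d - k : ℕ) : ℝ) * lam)) :=
  stmt_3_general d lam hlam ν
end

section
/- With λ > 1 and d ≥ 1, the rates ν_j = j!(λ−1)^{j−1} / ∏_{k=1}^{j} (k + (2d−k)λ) satisfy ν_j > 0 for all 1 ≤ j ≤ 2d, and Σ_{j=1}^{2d} C(2d, j) ν_j = 1. -/
/-!
Write `D k = k + (n - k) λ` and `μ = λ - 1`, so that `D k - (n - k) μ = n` for `k ≤ n`.
The partial products `T j = ∏_{k ≤ j} (n - k) μ / D k` satisfy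
`T (j - 1) - T j = T (j - 1) · n / D j = C(n, j) ν_j`, because
`n (n - 1) ⋯ (n - j + 1) = j! C(n, j)`. Hence `∑_{j=1}^{n} C(n, j) ν_j` telescopes to
`T 0 - T n = 1 - 0`, the factor `k = n` of `T n` being zero.
-/

open Finset

noncomputable section

namespace DeathBirth

variable (n : ℕ) (lam : ℝ)

def deathRate (j : ℕ) : ℝ :=
  (j.factorial : ℝ) * (lam - 1) ^ (j - 1) / ∏ k ∈ Icc 1 j, ((k : ℝ) + ((n - k : ℕ) : ℝ) * lam)

/-- Equals the tail `∑_{i > j} C(n, i) · deathRate n lam i` (see `deathRateTail_sub_succ`). -/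
def deathRateTail (j : ℕ) : ℝ :=
  ∏ k ∈ Icc 1 j, ((n - k : ℕ) : ℝ) * (lam - 1) / ((k : ℝ) + ((n - k : ℕ) : ℝ) * lam)

variable {n lam}

lemma deathRate_denom_pos (hlam : 0 ≤ lam) {k : ℕ} (hk : 1 ≤ k) :
    0 < (k : ℝ) + ((n - k : ℕ) : ℝ) * lam := by
  have : (1 : ℝ) ≤ k := by exact_mod_cast hk
  positivity

lemma deathRate_pos (hlam : 1 < lam) (j : ℕ) : 0 < deathRate n lam j := by
  have hden : 0 < ∏ k ∈ Icc 1 j, ((k : ℝ) + ((n - k : ℕ) : ℝ) * lam) :=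
    prod_pos fun k hk => deathRate_denom_pos (by linarith) (mem_Icc.mp hk).1
  have : 0 < lam - 1 := by linarith
  unfold deathRate
  positivity

lemma deathRateTail_succ (j : ℕ) :
    deathRateTail n lam (j + 1) = deathRateTail n lam j *
      (((n - (j + 1) : ℕ) : ℝ) * (lam - 1) / (((j + 1 : ℕ) : ℝ) + ((n - (j + 1) : ℕ) : ℝ) * lam)) :=
  prod_Icc_succ_top (by omega) _

lemma natCast_mul_deathRateTail (j : ℕ) :
    n * deathRateTail n lam j = (lam - 1) ^ j * (n.descFactorial (j + 1) : ℝ) /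
      ∏ k ∈ Icc 1 j, ((k : ℝ) + ((n - k : ℕ) : ℝ) * lam) := by
  induction j with
  | zero => simp [deathRateTail]
  | succ j ih =>
    rw [deathRateTail_succ, ← mul_assoc, ih, prod_Icc_succ_top (by omega),
      Nat.descFactorial_succ n (j + 1), div_mul_div_comm]
    push_cast
    ring

lemma one_sub_deathRate_ratio {k : ℕ} (hk : k ≤ n) (hD : (k : ℝ) + ((n - k : ℕ) : ℝ) * lam ≠ 0) :
    1 - ((n - k : ℕ) : ℝ) * (lam - 1) / ((k : ℝ) + ((n - k : ℕ) : ℝ) * lam) =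
      n / ((k : ℝ) + ((n - k : ℕ) : ℝ) * lam) := by
  rw [one_sub_div hD, Nat.cast_sub hk]
  ring_nf

lemma deathRateTail_sub_succ (hlam : 0 ≤ lam) {j : ℕ} (hj : j < n) :
    deathRateTail n lam j - deathRateTail n lam (j + 1) =
      (n.choose (j + 1) : ℝ) * deathRate n lam (j + 1) := by
  have hD := (deathRate_denom_pos (n := n) hlam (Nat.le_add_left 1 j)).ne'
  rw [deathRateTail_succ, ← mul_one_sub, one_sub_deathRate_ratio hj hD, mul_div_assoc', mul_comm,
    natCast_mul_deathRateTail, deathRate, prod_Icc_succ_top (by omega),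
    Nat.descFactorial_eq_factorial_mul_choose, Nat.add_sub_cancel, div_div]
  push_cast
  ring

lemma deathRateTail_zero : deathRateTail n lam 0 = 1 := by
  simp [deathRateTail]

lemma deathRateTail_self (hn : 1 ≤ n) : deathRateTail n lam n = 0 :=
  prod_eq_zero (mem_Icc.mpr ⟨hn, le_rfl⟩) (by simp)

theorem sum_choose_mul_deathRate (hn : 1 ≤ n) (hlam : 0 ≤ lam) :
    ∑ j ∈ Icc 1 n, (n.choose j : ℝ) * deathRate n lam j = 1 := by
  calc ∑ j ∈ Icc 1 n, (n.choose j : ℝ) * deathRate n lam j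
      = ∑ j ∈ range n, (n.choose (j + 1) : ℝ) * deathRate n lam (j + 1) := by
        rw [range_eq_Ico, sum_Ico_add' (fun j => (n.choose j : ℝ) * deathRate n lam j),
          Ico_add_one_right_eq_Icc, zero_add]
    _ = ∑ j ∈ range n, (deathRateTail n lam j - deathRateTail n lam (j + 1)) :=
        sum_congr rfl fun j hj => (deathRateTail_sub_succ hlam (mem_range.mp hj)).symm
    _ = 1 := by rw [sum_range_sub', deathRateTail_zero, deathRateTail_self hn, sub_zero]

end DeathBirth

end

open DeathBirth in
/-- The rates `ν_j = j!(λ−1)^{j−1} / ∏_{k=1}^{j} (k+(2d−k)λ)` are positive for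
`1 ≤ j ≤ 2d`, and `Σ_{j=1}^{2d} C(2d,j) ν_j = 1`. -/
theorem stmt_4 (d : ℕ) (hd : 1 ≤ d) (lam : ℝ) (hlam : 1 < lam)
    (ν : ℕ → ℝ)
    (hν : ∀ j, ν j = (Nat.factorial j : ℝ) * (lam - 1) ^ (j - 1) /
      ∏ k ∈ Finset.Icc 1 j, ((k : ℝ) + ((2 * d - k : ℕ) : ℝ) * lam)) :
    (∀ j, 1 ≤ j → j ≤ 2 * d → 0 < ν j) ∧
    ∑ j ∈ Finset.Icc 1 (2 * d), (Nat.choose (2 * d) j : ℝ) * ν j = 1 := by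
  obtain rfl : ν = deathRate (2 * d) lam := funext hν
  exact ⟨fun j _ _ => deathRate_pos hlam j, sum_choose_mul_deathRate (by omega) (by linarith)⟩
end

section
/- For every finite nonempty set A ⊆ ℤ^d with d ≥ 2, the number of vertices in the complement of A that are at ℓ¹-distance 1 from A and lie in the unbounded connected component of ℤ^d \ A is at least 2·|A|^{1−1/d}. -/
/-!
Project along a coordinate direction `i` by `f ↦ update f i 0`. The discrete Loomis–Whitney
inequality `|A| ^ (d - 1) ≤ ∏ᵢ |πᵢ A|`, proved by slicing along one coordinate and applying
Hölder's inequality to the slices, yields a direction with `|πᵢ A| ≥ |A| ^ ((d - 1) / d)`.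
Each line in that direction meeting `A` carries two points of the outer boundary, just above its
highest and just below its lowest point of `A`: from each of them a ray escapes to infinity
without meeting `A`.
-/

open Finset Function
open scoped ENNReal

open MeasureTheory in
theorem ENNReal.sum_prod_rpow_le_prod_sum_rpow {ι τ : Type*} (s : Finset ι) (t : Finset τ)
    (f : ι → τ → ℝ≥0∞) {w : ι → ℝ} (hw : ∑ i ∈ s, w i = 1) (hw₀ : ∀ i ∈ s, 0 ≤ w i) :
    ∑ x ∈ t, ∏ i ∈ s, f i x ^ w i ≤ ∏ i ∈ s, (∑ x ∈ t, f i x) ^ w i := by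
  let _ : MeasurableSpace τ := ⊤
  have : DiscreteMeasurableSpace τ := ⟨fun _ => trivial⟩
  simpa [lintegral_finset] using
    lintegral_prod_norm_pow_le (μ := Measure.count.restrict t) s
      (fun i _ => (Measurable.of_discrete (f := f i)).aemeasurable) hw hw₀

theorem ENNReal.sum_pow_card_le_mul_prod {ι τ : Type*} {s : Finset ι} {t : Finset τ}
    (hs : s.Nonempty) {n : τ → ℝ≥0∞} {c : ι → τ → ℝ≥0∞} {Q : ℝ≥0∞} {P : ι → ℝ≥0∞}
    (hn : ∀ x ∈ t, n x ^ #s ≤ Q * ∏ i ∈ s, c i x) (hc : ∀ i ∈ s, ∑ x ∈ t, c i x ≤ P i) :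
    (∑ x ∈ t, n x) ^ #s ≤ Q * ∏ i ∈ s, P i := by
  have hk : #s ≠ 0 := hs.card_pos.ne'
  set w : ℝ := (#s : ℝ)⁻¹
  have hw : 0 ≤ w := by positivity
  have hroot : ∀ x ∈ t, n x ≤ Q ^ w * ∏ i ∈ s, c i x ^ w := fun x hx => by
    rw [prod_rpow_of_nonneg hw, ← mul_rpow_of_nonneg _ _ hw, ← pow_rpow_inv_natCast hk (n x)]
    exact rpow_le_rpow (hn x hx) hw
  have hholder : ∑ x ∈ t, ∏ i ∈ s, c i x ^ w ≤ ∏ i ∈ s, (∑ x ∈ t, c i x) ^ w :=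
    sum_prod_rpow_le_prod_sum_rpow s t c (by simp [w, hk]) fun _ _ => hw
  calc (∑ x ∈ t, n x) ^ #s
      ≤ (Q ^ w * ∏ i ∈ s, (∑ x ∈ t, c i x) ^ w) ^ #s := by
        gcongr
        calc ∑ x ∈ t, n x ≤ ∑ x ∈ t, Q ^ w * ∏ i ∈ s, c i x ^ w := sum_le_sum hroot
          _ ≤ _ := by rw [← mul_sum]; exact mul_le_mul_right hholder _
    _ ≤ ((Q * ∏ i ∈ s, P i) ^ w) ^ #s := by
        rw [mul_rpow_of_nonneg _ _ hw, ← prod_rpow_of_nonneg hw]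
        gcongr with i hi
        exact hc i hi
    _ = Q * ∏ i ∈ s, P i := rpow_inv_natCast_pow hk _

section LoomisWhitney

theorem Function.update_injOn_setOf_apply_eq {ι α : Type*} [DecidableEq ι] (i : ι) (x y : α) :
    Set.InjOn (update · i x) {f : ι → α | f i = y} := by
  intro f hf g hg hfg
  calc f = update (update f i x) i y := by rw [update_idem, ← hf, update_eq_self]
    _ = update (update g i x) i y := congrArg (update · i y) hfg
    _ = g := by rw [update_idem, ← hg, update_eq_self]

variable {ι α : Type*} [DecidableEq ι] [DecidableEq α] [Fintype ι]

theorem Finset.card_image_update_of_forall_apply_eq {B : Finset (ι → α)} {a : ι} {y : α}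
    (hB : ∀ f ∈ B, f a = y) (x : α) : #(B.image (update · a x)) = #B :=
  card_image_of_injOn fun _ hf _ hg => update_injOn_setOf_apply_eq a x y (hB _ hf) (hB _ hg)

theorem Finset.card_image_update_image_update_of_forall_apply_eq {B : Finset (ι → α)} {a i : ι}
    {y : α} (hB : ∀ f ∈ B, f a = y) (hia : i ≠ a) (b c : α) :
    #((B.image (update · a b)).image (update · i c)) = #(B.image (update · i c)) := by
  have hcomm : (fun f : ι → α => update f i c) ∘ (fun f => update f a b) =
      (fun f => update f a b) ∘ (fun f => update f i c) := by
    ext1 f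
    exact (update_comm hia c b f).symm
  rw [image_image, hcomm, ← image_image]
  refine card_image_update_of_forall_apply_eq (y := y) (fun f hf => ?_) b
  obtain ⟨g, hg, rfl⟩ := mem_image.1 hf
  rw [update_of_ne hia.symm, hB g hg]

theorem Finset.card_image_update_eq_sum_fiberwise (A : Finset (ι → α)) {a i : ι} (hia : i ≠ a)
    (b : α) :
    #(A.image (update · i b)) =
      ∑ y ∈ A.image (fun f => f a), #((A.filter (· a = y)).image (update · i b)) := by
  rw [card_eq_sum_card_image (· a), image_image]
  simp only [comp_def, update_of_ne hia.symm, filter_image]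

variable [Zero α]

theorem Finset.card_pow_le_prod_card_image_update_of_support (s : Finset ι)
    (A : Finset (ι → α)) (hA : A.Nonempty) (hsupp : ∀ f ∈ A, ∀ j ∉ s, f j = 0) :
    #A ^ (#s - 1) ≤ ∏ i ∈ s, #(A.image (update · i 0)) := by
  induction s using Finset.induction_on generalizing A with
  | empty => simp
  | @insert a s ha ih =>
    obtain rfl | hs := s.eq_empty_or_nonempty
    · simpa using (hA.image (update · a 0)).card_pos
    have hne : ∀ i ∈ s, i ≠ a := fun i hi h => ha (h ▸ hi)
    have hslice : ∀ y ∈ A.image (· a), #(A.filter (· a = y)) ^ #s ≤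
        #(A.image (update · a 0)) * ∏ i ∈ s, #((A.filter (· a = y)).image (update · i 0)) := by
      intro y hy
      set S := A.filter (· a = y)
      have hS : ∀ f ∈ S, f a = y := fun f hf => (mem_filter.1 hf).2
      have hSne : S.Nonempty := by
        obtain ⟨f, hf, rfl⟩ := mem_image.1 hy
        exact ⟨f, mem_filter.2 ⟨hf, rfl⟩⟩
      have hIH := ih (S.image (update · a 0)) (hSne.image _) fun f hf j hj => by
        obtain ⟨g, hg, rfl⟩ := mem_image.1 hf
        rcases eq_or_ne j a with rfl | hja
        · exact update_self _ _ _
        · rw [update_of_ne hja]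
          exact hsupp g (filter_subset _ _ hg) j (by simp [hja, hj])
      rw [card_image_update_of_forall_apply_eq hS] at hIH
      have hSle : #S ≤ #(A.image (update · a 0)) := by
        rw [← card_image_update_of_forall_apply_eq hS 0]
        exact card_le_card (image_subset_image (filter_subset _ _))
      calc #S ^ #s = #S * #S ^ (#s - 1) := by rw [← pow_succ', Nat.sub_add_cancel hs.card_pos]
        _ ≤ _ := Nat.mul_le_mul hSle (hIH.trans_eq (prod_congr rfl fun i hi =>
          card_image_update_image_update_of_forall_apply_eq hS (hne i hi) 0 0))
    have key := ENNReal.sum_pow_card_le_mul_prod hs (t := A.image (· a))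
      (n := fun y => (#(A.filter (· a = y)) : ℝ≥0∞)) (Q := #(A.image (update · a 0)))
      (c := fun i y => #((A.filter (· a = y)).image (update · i 0)))
      (P := fun i => (#(A.image (update · i 0)) : ℝ≥0∞)) (by exact_mod_cast hslice)
      fun i hi => by exact_mod_cast (card_image_update_eq_sum_fiberwise A (hne i hi) 0).ge
    rw [card_insert_of_notMem ha, add_tsub_cancel_right, prod_insert ha,
      card_eq_sum_card_image (· a) A]
    exact_mod_cast key

/-- The discrete Loomis–Whitney inequality. -/
theorem Finset.card_pow_le_prod_card_image_update (A : Finset (ι → α)) (hA : A.Nonempty) :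
    #A ^ (Fintype.card ι - 1) ≤ ∏ i, #(A.image (update · i 0)) := by
  simpa using card_pow_le_prod_card_image_update_of_support univ A hA (by simp)

theorem Finset.exists_card_pow_le_card_image_update_pow [Nonempty ι] (A : Finset (ι → α))
    (hA : A.Nonempty) :
    ∃ i, #A ^ (Fintype.card ι - 1) ≤ #(A.image (update · i 0)) ^ Fintype.card ι := by
  obtain ⟨i, -, hi⟩ := exists_max_image univ (fun i => #(A.image (update · i 0))) univ_nonempty
  refine ⟨i, (card_pow_le_prod_card_image_update A hA).trans ?_⟩
  exact (prod_le_prod' fun j _ => hi j (mem_univ j)).trans_eq (by rw [prod_const, card_univ])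

end LoomisWhitney

theorem Real.rpow_sub_one_div_le_of_pow_sub_one_le {a b : ℝ} (ha : 0 ≤ a) (hb : 0 ≤ b) {d : ℕ}
    (hd : d ≠ 0) (h : a ^ (d - 1) ≤ b ^ d) : a ^ (((d : ℝ) - 1) / d) ≤ b := by
  refine le_of_pow_le_pow_left₀ hd hb ?_
  rwa [← rpow_natCast, ← rpow_mul ha, div_mul_cancel₀ _ (by exact_mod_cast hd),
    ← Nat.cast_pred (Nat.pos_of_ne_zero hd), rpow_natCast]

section Boundary

variable {ι : Type*} [Fintype ι] [DecidableEq ι]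

def outsideAdj (A : Set (ι → ℤ)) (a b : ι → ℤ) : Prop :=
  a ∉ A ∧ b ∉ A ∧ ∑ i, |a i - b i| = 1

def outerBoundary (A : Set (ι → ℤ)) : Set (ι → ℤ) :=
  {x | x ∉ A ∧ (∃ y ∈ A, ∑ i, |x i - y i| = 1) ∧
    {y | Relation.ReflTransGen (outsideAdj A) x y}.Infinite}

theorem sum_abs_sub_update_update (x : ι → ℤ) (i : ι) (u v : ℤ) :
    ∑ j, |update x i u j - update x i v j| = |u - v| := by
  rw [sum_eq_single i fun j _ hj => by simp [update_of_ne hj]] <;> simp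

theorem infinite_reachable_of_ray {A : Set (ι → ℤ)} {x : ι → ℤ} {i : ι} {v ε : ℤ}
    (hε : |ε| = 1) (hray : ∀ n : ℕ, update x i (v + ε * n) ∉ A) :
    {y | Relation.ReflTransGen (outsideAdj A) (update x i v) y}.Infinite := by
  have hreach : ∀ n : ℕ, Relation.ReflTransGen (outsideAdj A) (update x i v)
      (update x i (v + ε * n)) := by
    intro n
    induction n with
    | zero => simpa using Relation.ReflTransGen.refl
    | succ n ih =>
      refine ih.tail ⟨hray n, hray (n + 1), ?_⟩
      rw [sum_abs_sub_update_update]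
      push_cast
      rw [show v + ε * n - (v + ε * (n + 1)) = -ε by ring, abs_neg, hε]
  have hε₀ : ε ≠ 0 := by rintro rfl; simp at hε
  refine Set.infinite_of_injective_forall_mem (fun m n hmn => ?_) hreach
  simpa [hε₀] using congrFun hmn i

theorem update_add_mem_outerBoundary {A : Set (ι → ℤ)} {x : ι → ℤ} {i : ι} {v ε : ℤ}
    (hv : update x i v ∈ A) (hε : |ε| = 1) (hray : ∀ n : ℕ, update x i (v + ε * (n + 1)) ∉ A) :
    update x i (v + ε) ∈ outerBoundary A := by
  refine ⟨by simpa using hray 0,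
    ⟨_, hv, by rw [sum_abs_sub_update_update, add_sub_cancel_left, hε]⟩,
    infinite_reachable_of_ray hε fun n => ?_⟩
  convert hray n using 3
  ring

theorem exists_update_mem_outerBoundary {A : Set (ι → ℤ)} (hA : A.Finite) {x : ι → ℤ}
    (hx : x ∈ A) (i : ι) :
    ∃ u w, w < u ∧ update x i u ∈ outerBoundary A ∧ update x i w ∈ outerBoundary A := by
  set H := {v | update x i v ∈ A}
  have hH : H.Finite := hA.preimage (update_injective x i).injOn
  have hHne : H.Nonempty := ⟨x i, by simpa [H] using hx⟩
  obtain ⟨M, hM, hMmax⟩ := Set.exists_max_image H id hH hHne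
  obtain ⟨m, hm, hmmin⟩ := Set.exists_min_image H id hH hHne
  refine ⟨M + 1, m + -1, by have := hmmin M hM; simp only [id] at this; omega, ?_, ?_⟩
  · refine update_add_mem_outerBoundary hM abs_one fun n hn => ?_
    have := hMmax _ hn
    simp only [id] at this
    omega
  · refine update_add_mem_outerBoundary hm (by simp) fun n hn => ?_
    have := hmmin _ hn
    simp only [id] at this
    omega

theorem finite_outerBoundary {A : Set (ι → ℤ)} (hA : A.Finite) : (outerBoundary A).Finite := by
  refine (hA.biUnion fun y _ => Set.finite_Icc (y - 1) (y + 1)).subset ?_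
  rintro x ⟨-, ⟨y, hy, hxy⟩, -⟩
  have hle : ∀ j, |x j - y j| ≤ 1 := fun j =>
    hxy ▸ single_le_sum (f := fun k => |x k - y k|) (fun k _ => abs_nonneg _) (mem_univ j)
  refine Set.mem_biUnion hy ⟨fun j => ?_, fun j => ?_⟩ <;>
  · have := abs_le.1 (hle j)
    simp only [Pi.add_apply, Pi.sub_apply, Pi.one_apply]
    omega

theorem two_mul_card_image_update_le_ncard_outerBoundary (A : Finset (ι → ℤ)) (i : ι) :
    2 * #(A.image (update · i 0)) ≤ (outerBoundary (A : Set (ι → ℤ))).ncard := by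
  have hfin := finite_outerBoundary A.finite_toSet
  rw [Set.ncard_eq_toFinset_card _ hfin]
  set π := (update · i 0 : (ι → ℤ) → ι → ℤ)
  refine (mul_card_image_le_card_of_maps_to (s := hfin.toFinset.filter (π · ∈ A.image π))
    (fun y hy => (mem_filter.1 hy).2) 2 ?_).trans (card_filter_le _ _)
  intro g hg
  obtain ⟨x, hx, rfl⟩ := mem_image.1 hg
  obtain ⟨u, w, hwu, hu, hw⟩ := exists_update_mem_outerBoundary A.finite_toSet (mem_coe.2 hx) i
  refine one_lt_card_iff.2 ⟨update x i u, update x i w, by simpa [π, hu] using hg,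
    by simpa [π, hw] using hg, fun h => ?_⟩
  simpa using hwu.ne' (by simpa using congrFun h i)

end Boundary

/-- Isoperimetric inequality: for a finite nonempty `A ⊆ ℤ^d`, `d ≥ 2`, the number of
vertices at ℓ¹-distance 1 from `A`, outside `A`, lying in the unbounded (i.e. infinite)
connected component of `ℤ^d \ A` (with nearest-neighbor adjacency), is at least
`2·|A|^{1−1/d}`. -/
theorem stmt_5 (d : ℕ) (hd : 2 ≤ d) (A : Set (Fin d → ℤ)) (hA : A.Finite)
    (hne : A.Nonempty) :
    2 * (A.ncard : ℝ) ^ (((d : ℝ) - 1) / d) ≤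
      ({x : Fin d → ℤ | x ∉ A ∧ (∃ y ∈ A, (∑ i, |x i - y i|) = 1) ∧
        {y : Fin d → ℤ | Relation.ReflTransGen
            (fun a b => a ∉ A ∧ b ∉ A ∧ (∑ i, |a i - b i|) = 1) x y}.Infinite}.ncard
        : ℝ) := by
  change _ ≤ ((outerBoundary A).ncard : ℝ)
  have : Nonempty (Fin d) := ⟨⟨0, by omega⟩⟩
  obtain ⟨i, hi⟩ :=
    exists_card_pow_le_card_image_update_pow hA.toFinset (hA.toFinset_nonempty.2 hne)
  rw [Fintype.card_fin] at hi
  have hproj : (A.ncard : ℝ) ^ (((d : ℝ) - 1) / d) ≤ #(hA.toFinset.image (update · i 0)) :=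
    Real.rpow_sub_one_div_le_of_pow_sub_one_le (by positivity) (by positivity) (by omega)
      (by rw [Set.ncard_eq_toFinset_card A hA]; exact_mod_cast hi)
  have hbdry := two_mul_card_image_update_le_ncard_outerBoundary hA.toFinset i
  rw [hA.coe_toFinset] at hbdry
  calc 2 * (A.ncard : ℝ) ^ (((d : ℝ) - 1) / d) ≤ 2 * #(hA.toFinset.image (update · i 0)) := by
        gcongr
    _ ≤ (outerBoundary A).ncard := by exact_mod_cast hbdry
end

section
/- (Loomis–Whitney corollary) For any finite set A ⊆ ℤ^d, if A_i denotes the projection of A deleting the i-th coordinate, then ∏_{i=1}^{d} |A_i| ≥ |A|^{d−1}; consequently there exists j with |A_j| ≥ |A|^{(d−1)/d}. -/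
/-!
Induction on the dimension. For `A ⊆ α^(n+1)` let `A^t ⊆ α^n` be the slice of `A` at last
coordinate `t`. Each slice lies in the projection `A_last`, and by induction
`|A^t|^(n-1) ≤ ∏_{i<n} |(A^t)_i|`, so `|A^t|^n ≤ |A_last| ∏_{i<n} |(A^t)_i|`. For `i < n` the
projection `A_i` is, fibred over the last coordinate, the disjoint union of the `(A^t)_i`; so
summing the slice bounds over `t` with Hölder's inequality for `n` functions (a consequence of
weighted AM-GM) gives `|A|^n ≤ ∏_{i≤n} |A_i|`.
-/

open Finset

namespace Real

theorem sum_prod_rpow_le_prod_sum_rpow {ι κ : Type*} (s : Finset ι) (u : Finset κ) {w : κ → ℝ}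
    (hw : ∀ i ∈ u, 0 ≤ w i) (hw₁ : ∑ i ∈ u, w i = 1) {f : κ → ι → ℝ}
    (hf : ∀ i ∈ u, ∀ t ∈ s, 0 ≤ f i t) :
    ∑ t ∈ s, ∏ i ∈ u, f i t ^ w i ≤ ∏ i ∈ u, (∑ t ∈ s, f i t) ^ w i := by
  set S : κ → ℝ := fun i => ∑ t ∈ s, f i t
  have hS : ∀ i ∈ u, 0 ≤ S i := fun i hi => sum_nonneg (hf i hi)
  -- `f i t = S i * (f i t / S i)` holds even when `S i = 0`, since then `f i t = 0`.
  have hsplit : ∀ i ∈ u, ∀ t ∈ s, f i t = S i * (f i t / S i) := by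
    intro i hi t ht
    rcases (hS i hi).eq_or_lt with h0 | hpos
    · rw [(sum_eq_zero_iff_of_nonneg (hf i hi)).1 h0.symm t ht, zero_div, mul_zero]
    · rw [mul_div_cancel₀ _ hpos.ne']
  have hamgm : ∀ t ∈ s, ∏ i ∈ u, (f i t / S i) ^ w i ≤ ∑ i ∈ u, w i * (f i t / S i) :=
    fun t ht => geom_mean_le_arith_mean_weighted u w _ hw hw₁
      fun i hi => div_nonneg (hf i hi t ht) (hS i hi)
  have hP : 0 ≤ ∏ i ∈ u, S i ^ w i := prod_nonneg fun i hi => rpow_nonneg (hS i hi) _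
  calc ∑ t ∈ s, ∏ i ∈ u, f i t ^ w i
      = (∏ i ∈ u, S i ^ w i) * ∑ t ∈ s, ∏ i ∈ u, (f i t / S i) ^ w i := by
        rw [mul_sum]
        refine sum_congr rfl fun t ht => ?_
        rw [← prod_mul_distrib]
        refine prod_congr rfl fun i hi => ?_
        rw [← mul_rpow (hS i hi) (div_nonneg (hf i hi t ht) (hS i hi)), ← hsplit i hi t ht]
    _ ≤ (∏ i ∈ u, S i ^ w i) * ∑ t ∈ s, ∑ i ∈ u, w i * (f i t / S i) :=
        mul_le_mul_of_nonneg_left (sum_le_sum hamgm) hP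
    _ = (∏ i ∈ u, S i ^ w i) * ∑ i ∈ u, w i * (S i / S i) := by
        rw [sum_comm]
        simp only [← mul_sum, ← sum_div, S]
    _ ≤ (∏ i ∈ u, S i ^ w i) * ∑ i ∈ u, w i :=
        mul_le_mul_of_nonneg_left (sum_le_sum fun i hi =>
          mul_le_of_le_one_right (hw i hi) (div_self_le_one _)) hP
    _ = ∏ i ∈ u, S i ^ w i := by rw [hw₁, mul_one]

theorem sum_pow_card_le_mul_prod_sum {ι κ : Type*} [Fintype κ] [Nonempty κ] (s : Finset ι)
    {a : ι → ℝ} {C : ℝ} {b : κ → ι → ℝ} (ha : ∀ t ∈ s, 0 ≤ a t) (hC : 0 ≤ C)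
    (hb : ∀ i, ∀ t ∈ s, 0 ≤ b i t) (h : ∀ t ∈ s, a t ^ Fintype.card κ ≤ C * ∏ i, b i t) :
    (∑ t ∈ s, a t) ^ Fintype.card κ ≤ C * ∏ i, ∑ t ∈ s, b i t := by
  set m : ℝ := (Fintype.card κ : ℝ)
  have hm : 0 < m := by positivity
  have hroot : ∀ {x : ℝ}, 0 ≤ x → ∀ {y : ℝ}, 0 ≤ y → (x ^ Fintype.card κ ≤ C * y ↔
      x ≤ C ^ m⁻¹ * y ^ m⁻¹) := fun hx y hy => by
    rw [← mul_rpow hC hy, le_rpow_inv_iff_of_pos hx (mul_nonneg hC hy) hm, rpow_natCast]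
  rw [hroot (sum_nonneg ha) (prod_nonneg fun i _ => sum_nonneg (hb i)),
    ← finsetProd_rpow _ _ fun i _ => sum_nonneg (hb i)]
  calc ∑ t ∈ s, a t ≤ ∑ t ∈ s, C ^ m⁻¹ * ∏ i, b i t ^ m⁻¹ := by
        refine sum_le_sum fun t ht => ?_
        rw [finsetProd_rpow _ _ fun i _ => hb i t ht]
        exact (hroot (ha t ht) (prod_nonneg fun i _ => hb i t ht)).1 (h t ht)
    _ ≤ C ^ m⁻¹ * ∏ i, (∑ t ∈ s, b i t) ^ m⁻¹ := by
        rw [← mul_sum]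
        gcongr
        exact sum_prod_rpow_le_prod_sum_rpow s univ (fun _ _ => by positivity)
          (by simp [m]) fun i _ => hb i

theorem exists_rpow_div_card_le_of_le_prod {κ : Type*} [Fintype κ] [Nonempty κ] {f : κ → ℝ}
    (hf : ∀ i, 0 ≤ f i) {x p : ℝ} (hx : 0 ≤ x) (h : x ^ p ≤ ∏ i, f i) :
    ∃ j, x ^ (p / Fintype.card κ) ≤ f j := by
  obtain ⟨j, -, hj⟩ := exists_max_image univ f univ_nonempty
  have hpow : x ^ p ≤ f j ^ Fintype.card κ := h.trans <|
    (prod_le_prod (fun i _ => hf i) fun i _ => hj i (mem_univ i)).trans_eq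
      (by rw [prod_const, card_univ])
  refine ⟨j, ?_⟩
  calc x ^ (p / Fintype.card κ) = (x ^ p) ^ (Fintype.card κ : ℝ)⁻¹ := by
        rw [div_eq_mul_inv, rpow_mul hx]
    _ ≤ (f j ^ Fintype.card κ) ^ (Fintype.card κ : ℝ)⁻¹ := by gcongr
    _ = f j := pow_rpow_inv_natCast (hf j) Fintype.card_ne_zero

end Real

theorem Fin.castSucc_succAbove_last {n : ℕ} (i : Fin (n + 1)) :
    i.castSucc.succAbove (Fin.last n) = Fin.last (n + 1) :=
  Fin.succAbove_ne_last_last (Fin.castSucc_ne_last i)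

namespace LoomisWhitney

variable {α : Type*} [DecidableEq α] {n : ℕ}

def proj (A : Finset (Fin (n + 1) → α)) (i : Fin (n + 1)) : Finset (Fin n → α) :=
  A.image fun x => x ∘ i.succAbove

def slice (A : Finset (Fin (n + 1) → α)) (t : α) : Finset (Fin n → α) :=
  {x ∈ A | x (Fin.last n) = t}.image Fin.init

theorem card_eq_sum_card_slice (A : Finset (Fin (n + 1) → α)) {S : Finset α}
    (hS : ∀ x ∈ A, x (Fin.last n) ∈ S) : #A = ∑ t ∈ S, #(slice A t) := by
  rw [card_eq_sum_card_fiberwise hS]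
  refine sum_congr rfl fun t _ => (card_image_of_injOn fun x hx y hy hxy => ?_).symm
  rw [← Fin.snoc_init_self x, ← Fin.snoc_init_self y, hxy, (mem_filter.1 hx).2,
    (mem_filter.1 hy).2]

theorem slice_nonempty {A : Finset (Fin (n + 1) → α)} {x : Fin (n + 1) → α} (hx : x ∈ A) :
    (slice A (x (Fin.last n))).Nonempty :=
  ⟨_, mem_image_of_mem _ (mem_filter.2 ⟨hx, rfl⟩)⟩

theorem slice_subset_proj_last (A : Finset (Fin (n + 1) → α)) (t : α) :
    slice A t ⊆ proj A (Fin.last n) := by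
  rw [proj, Fin.succAbove_last]
  exact image_subset_image (filter_subset _ _)

theorem slice_proj_castSucc (A : Finset (Fin (n + 2) → α)) (i : Fin (n + 1)) (t : α) :
    slice (proj A i.castSucc) t = proj (slice A t) i := by
  have hinit (x : Fin (n + 2) → α) :
      Fin.init (x ∘ i.castSucc.succAbove) = Fin.init x ∘ i.succAbove :=
    funext fun _ => congrArg x Fin.castSucc_succAbove_castSucc
  rw [slice, proj, filter_image, image_image]
  simp only [Function.comp_apply, Fin.castSucc_succAbove_last]
  rw [slice, proj, image_image]
  exact image_congr fun x _ => hinit x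

theorem card_proj_castSucc (A : Finset (Fin (n + 2) → α)) (i : Fin (n + 1)) :
    #(proj A i.castSucc) = ∑ t ∈ A.image (· (Fin.last _)), #(proj (slice A t) i) := by
  simp only [← slice_proj_castSucc]
  refine card_eq_sum_card_slice _ fun y hy => ?_
  rw [proj] at hy
  obtain ⟨x, hx, rfl⟩ := mem_image.1 hy
  rw [Function.comp_apply, Fin.castSucc_succAbove_last]
  exact mem_image_of_mem _ hx

theorem card_pow_le_prod_card_proj (A : Finset (Fin (n + 1) → α)) (hA : A.Nonempty) :
    #A ^ n ≤ ∏ i, #(proj A i) := by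
  induction n with
  | zero => simpa [proj, Nat.one_le_iff_ne_zero] using hA.ne_empty
  | succ n ih =>
    set T := A.image (· (Fin.last (n + 1)))
    have hslice : ∀ t ∈ T, (#(slice A t) : ℝ) ^ Fintype.card (Fin (n + 1)) ≤
        #(proj A (Fin.last _)) * ∏ i, (#(proj (slice A t) i) : ℝ) := by
      intro t ht
      obtain ⟨x, hx, rfl⟩ := mem_image.1 ht
      rw [Fintype.card_fin, pow_succ']
      exact_mod_cast Nat.mul_le_mul (card_le_card (slice_subset_proj_last A _))
        (ih _ (slice_nonempty hx))
    have hsum := Real.sum_pow_card_le_mul_prod_sum T (fun t _ => Nat.cast_nonneg _)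
      (Nat.cast_nonneg _) (fun i t _ => Nat.cast_nonneg _) hslice
    rw [Fintype.card_fin] at hsum
    rw [Fin.prod_univ_castSucc, mul_comm, card_eq_sum_card_slice A fun x => mem_image_of_mem _]
    simp only [card_proj_castSucc]
    exact_mod_cast hsum

end LoomisWhitney

open LoomisWhitney in
/-- Loomis–Whitney corollary: for finite nonempty `A ⊆ ℤ^{d+1}`, with `A_i` the
projection of `A` deleting the `i`-th coordinate, `∏_i |A_i| ≥ |A|^d`; consequently
some projection satisfies `|A_j| ≥ |A|^{d/(d+1)}`. -/
theorem stmt_6 (d : ℕ) (A : Finset (Fin (d + 1) → ℤ)) (hne : A.Nonempty) :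
    (A.card : ℝ) ^ d ≤
      ∏ i : Fin (d + 1), ((A.image fun x => x ∘ Fin.succAbove i).card : ℝ) ∧
    ∃ j : Fin (d + 1), (A.card : ℝ) ^ ((d : ℝ) / (d + 1)) ≤
      ((A.image fun x => x ∘ Fin.succAbove j).card : ℝ) := by
  have hLW : (#A : ℝ) ^ d ≤ ∏ i, (#(proj A i) : ℝ) := by
    exact_mod_cast card_pow_le_prod_card_proj A hne
  refine ⟨hLW, ?_⟩
  have hLW' : (#A : ℝ) ^ (d : ℝ) ≤ ∏ i, (#(proj A i) : ℝ) := by rwa [Real.rpow_natCast]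
  simpa [proj] using
    Real.exists_rpow_div_card_le_of_le_prod (fun _ => Nat.cast_nonneg _) (Nat.cast_nonneg _) hLW'
end

section
/- Let d ≥ 2 and C ∈ (0,1). For the birth-death chain on ℕ absorbed at 0 with up-probability p_k = (1 + C·k^{−1/d})/2 from each state k ≥ 2 and arbitrary up-probability p₁ ∈ (0,1) from state 1, the survival probability from state 1 is at least (1/p₁ + (q₁/p₁)·I·C^{−d/(d−1)})⁻¹ > 0, where q₁ = 1−p₁ and I = ∫₀^∞ exp(−x^{(d−1)/d}) dx. -/
/-!
Write `a_k = C k^{-1/d}` and `α = (d-1)/d`. Since `log ((1 + a)/(1 - a)) ≥ 2a`, each ratio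
`q_k/p_k = (1 - a_k)/(1 + a_k)` is at most `exp (-2 a_k)`, and comparing
`(m+1)^α - m^α ≤ (m+1)^{α-1}` term by term gives `m^α ≤ 2 ∑_{k=2}^m k^{α-1}`; hence the ℓ-th
product of the ruin series is at most `exp (-C ℓ^α)`. The series is then dominated by
`∫₀^∞ exp (-C x^α) dx = C^{-1/α} I`, and the gambler's ruin formula gives the bound.
-/

open MeasureTheory Real

theorem one_sub_div_one_add_le_exp_neg_two_mul {a : ℝ} (ha : 0 ≤ a) :
    (1 - a) / (1 + a) ≤ exp (-(2 * a)) := by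
  rcases lt_or_ge a 1 with ha1 | ha1
  · have hlog : 2 * a ≤ log (1 + a) - log (1 - a) := by
      have hs := hasSum_log_sub_log_of_abs_lt_one (abs_lt.2 ⟨by linarith, ha1⟩)
      simpa using le_hasSum hs 0 fun k _ => by positivity
    rw [← exp_log (div_pos (by linarith) (by linarith) : 0 < (1 - a) / (1 + a)),
      log_div (by linarith) (by linarith)]
    exact exp_le_exp.2 (by linarith)
  · exact (div_nonpos_of_nonpos_of_nonneg (by linarith) (by linarith)).trans (exp_pos _).le

theorem prod_one_sub_div_one_add_le_exp {ι : Type*} (s : Finset ι) (a : ι → ℝ)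
    (ha : ∀ i ∈ s, a i ∈ Set.Icc 0 1) :
    ∏ i ∈ s, (1 - a i) / (1 + a i) ≤ exp (-(2 * ∑ i ∈ s, a i)) := by
  rw [Finset.mul_sum, ← Finset.sum_neg_distrib, exp_sum]
  exact Finset.prod_le_prod
    (fun i hi => div_nonneg (by linarith [(ha i hi).2]) (by linarith [(ha i hi).1]))
    fun i hi => one_sub_div_one_add_le_exp_neg_two_mul (ha i hi).1

theorem add_one_rpow_le_rpow_add_rpow_sub_one {x α : ℝ} (hx : 0 < x) (hα : α ≤ 1) :
    (x + 1) ^ α ≤ x ^ α + (x + 1) ^ (α - 1) := by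
  have hx1 : x + 1 ≠ 0 := by positivity
  calc (x + 1) ^ α = x * (x + 1) ^ (α - 1) + (x + 1) ^ (α - 1) := by
        rw [rpow_sub_one hx1]; field_simp
    _ ≤ x * x ^ (α - 1) + (x + 1) ^ (α - 1) := by
        have hanti := rpow_le_rpow_of_nonpos hx (le_add_of_nonneg_right zero_le_one)
          (sub_nonpos.2 hα)
        nlinarith
    _ = x ^ α + (x + 1) ^ (α - 1) := by rw [rpow_sub_one hx.ne']; field_simp

theorem rpow_le_two_mul_sum_Icc_rpow_sub_one {α : ℝ} (hα : α ≤ 1) {m : ℕ} (hm : 2 ≤ m) :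
    (m : ℝ) ^ α ≤ 2 * ∑ k ∈ Finset.Icc 2 m, (k : ℝ) ^ (α - 1) := by
  induction m, hm using Nat.le_induction with
  | base =>
    rw [Finset.Icc_self, Finset.sum_singleton, Nat.cast_ofNat, rpow_sub_one two_ne_zero]
    linarith
  | succ m hm ih =>
    rw [← Finset.insert_Icc_right_eq_Icc_add_one (by omega), Finset.sum_insert (by simp)]
    push_cast
    have hstep := add_one_rpow_le_rpow_add_rpow_sub_one (x := (m : ℝ)) (by positivity) hα
    have : 0 ≤ ((m : ℝ) + 1) ^ (α - 1) := by positivity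
    linarith

theorem mul_rpow_sub_one_mem_Icc {C α : ℝ} (hC : C ∈ Set.Icc 0 1) (hα : α ≤ 1) {k : ℕ}
    (hk : 1 ≤ k) : C * (k : ℝ) ^ (α - 1) ∈ Set.Icc 0 1 := by
  have hpow : (k : ℝ) ^ (α - 1) ≤ 1 :=
    rpow_le_one_of_one_le_of_nonpos (by exact_mod_cast hk) (by linarith)
  have : 0 ≤ (k : ℝ) ^ (α - 1) := by positivity
  exact ⟨by nlinarith [hC.1], by nlinarith [hC.1, hC.2]⟩

theorem prod_Icc_one_sub_div_one_add_le_exp {C α : ℝ} (hC : C ∈ Set.Icc 0 1) (hα : α ≤ 1)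
    {m : ℕ} (hm : 2 ≤ m) :
    ∏ k ∈ Finset.Icc 2 m, (1 - C * (k : ℝ) ^ (α - 1)) / (1 + C * (k : ℝ) ^ (α - 1))
      ≤ exp (-(C * (m : ℝ) ^ α)) := by
  refine (prod_one_sub_div_one_add_le_exp _ _ fun k hk =>
    mul_rpow_sub_one_mem_Icc hC hα (by linarith [(Finset.mem_Icc.1 hk).1])).trans
    (exp_le_exp.2 ?_)
  rw [← Finset.mul_sum]
  nlinarith [mul_le_mul_of_nonneg_left (rpow_le_two_mul_sum_Icc_rpow_sub_one hα hm) hC.1]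

theorem sum_range_exp_neg_mul_rpow_le {C α : ℝ} (hC : 0 < C) (hα : 0 < α) (n : ℕ) :
    ∑ i ∈ Finset.range n, exp (-(C * ((i : ℝ) + 1) ^ α))
      ≤ (∫ x in Set.Ioi (0 : ℝ), exp (-(x ^ α))) * C ^ (-1 / α) := by
  set g : ℝ → ℝ := fun x => exp (-(C * x ^ α))
  have hanti : AntitoneOn g (Set.Icc 0 (0 + n)) := fun x hx y _ hxy =>
    exp_le_exp.2 (by nlinarith [rpow_le_rpow hx.1 hxy hα.le])
  have hint : IntegrableOn g (Set.Ioi 0) := by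
    simpa using integrableOn_rpow_mul_exp_neg_mul_rpow (s := 0) (by norm_num) hα hC
  calc ∑ i ∈ Finset.range n, exp (-(C * ((i : ℝ) + 1) ^ α))
        = ∑ i ∈ Finset.range n, g (0 + (i + 1 : ℕ)) := by simp [g]
    _ ≤ ∫ x in (0 : ℝ)..0 + n, g x := hanti.sum_le_integral
    _ = ∫ x in Set.Ioc 0 (n : ℝ), g x := by
        rw [zero_add, intervalIntegral.integral_of_le (Nat.cast_nonneg n)]
    _ ≤ ∫ x in Set.Ioi 0, g x :=
        setIntegral_mono_set hint (.of_forall fun x => (exp_pos _).le)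
          Set.Ioc_subset_Ioi_self.eventuallyLE
    _ = _ := by
        have hscale := integral_exp_neg_mul_rpow hα hC
        simp only [neg_mul] at hscale
        rw [hscale, integral_exp_neg_rpow hα, mul_comm]

theorem tsum_prod_Icc_one_sub_div_one_add_mem_Icc {C α : ℝ} (hC0 : 0 < C) (hC1 : C ≤ 1)
    (hα0 : 0 < α) (hα1 : α ≤ 1) :
    ∑' ℓ : ℕ, ∏ k ∈ Finset.Icc 2 (ℓ + 2),
        (1 - C * (k : ℝ) ^ (α - 1)) / (1 + C * (k : ℝ) ^ (α - 1))
      ∈ Set.Icc 0 ((∫ x in Set.Ioi (0 : ℝ), exp (-(x ^ α))) * C ^ (-1 / α)) := by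
  set t : ℕ → ℝ := fun ℓ => ∏ k ∈ Finset.Icc 2 (ℓ + 2),
    (1 - C * (k : ℝ) ^ (α - 1)) / (1 + C * (k : ℝ) ^ (α - 1))
  have hC : C ∈ Set.Icc 0 1 := ⟨hC0.le, hC1⟩
  have ht0 (ℓ : ℕ) : 0 ≤ t ℓ := Finset.prod_nonneg fun k hk => by
    have hk := mul_rpow_sub_one_mem_Icc (k := k) hC hα1 (by linarith [(Finset.mem_Icc.1 hk).1])
    exact div_nonneg (by linarith [hk.2]) (by linarith [hk.1])
  have ht (ℓ : ℕ) : t ℓ ≤ exp (-(C * ((ℓ : ℝ) + 1) ^ α)) := by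
    refine (prod_Icc_one_sub_div_one_add_le_exp hC hα1 (m := ℓ + 2) (by omega)).trans ?_
    have : ((ℓ : ℝ) + 1) ^ α ≤ ((ℓ + 2 : ℕ) : ℝ) ^ α :=
      rpow_le_rpow (by positivity) (by push_cast; linarith) hα0.le
    exact exp_le_exp.2 (neg_le_neg (mul_le_mul_of_nonneg_left this hC0.le))
  exact ⟨tsum_nonneg ht0, Real.tsum_le_of_sum_range_le ht0 fun n =>
    (Finset.sum_le_sum fun ℓ _ => ht ℓ).trans (sum_range_exp_neg_mul_rpow_le hC0 hα0 n)⟩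

theorem inv_one_div_add_mul_le_inv_one_add_mul_one_add {p S T : ℝ} (hp0 : 0 < p) (hp1 : p ≤ 1)
    (hS0 : 0 ≤ S) (hST : S ≤ T) :
    (1 / p + (1 - p) / p * T)⁻¹ ≤ (1 + (1 - p) / p * (1 + S))⁻¹ ∧
      0 < (1 / p + (1 - p) / p * T)⁻¹ := by
  have hq : 0 ≤ (1 - p) / p := div_nonneg (by linarith) hp0.le
  have hruin : 1 + (1 - p) / p * (1 + S) = 1 / p + (1 - p) / p * S := by
    field_simp; ring
  have hpos : 0 < 1 / p + (1 - p) / p * S := by positivity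
  rw [hruin]
  exact ⟨inv_anti₀ hpos (by gcongr), inv_pos.2 (hpos.trans_le (by gcongr))⟩

/-- For the birth-death chain on ℕ absorbed at 0 with up-probability
`p_k = (1 + C k^{−1/d})/2` from each state `k ≥ 2` and `p₁ ∈ (0,1)` from state 1,
the survival probability from state 1 (given by the generalized gambler's ruin series)
is at least `(1/p₁ + (q₁/p₁)·I·C^{−d/(d−1)})⁻¹ > 0`, where
`I = ∫₀^∞ exp(−x^{(d−1)/d}) dx`. -/
theorem stmt_12 (d : ℕ) (hd : 2 ≤ d) (C : ℝ) (hC : C ∈ Set.Ioo (0 : ℝ) 1)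
    (p₁ : ℝ) (hp₁ : p₁ ∈ Set.Ioo (0 : ℝ) 1)
    (surv : ℝ)
    (hsurv : surv = (1 + ((1 - p₁) / p₁) * (1 + ∑' ℓ : ℕ,
      ∏ k ∈ Finset.Icc 2 (ℓ + 2),
        (1 - C * (k : ℝ) ^ (-(1 : ℝ) / d)) / (1 + C * (k : ℝ) ^ (-(1 : ℝ) / d))))⁻¹) :
    (1 / p₁ + ((1 - p₁) / p₁) *
        (∫ x in Set.Ioi (0 : ℝ), Real.exp (-(x ^ (((d : ℝ) - 1) / d)))) *
        C ^ (-(d : ℝ) / ((d : ℝ) - 1)))⁻¹ ≤ surv ∧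
    0 < (1 / p₁ + ((1 - p₁) / p₁) *
        (∫ x in Set.Ioi (0 : ℝ), Real.exp (-(x ^ (((d : ℝ) - 1) / d)))) *
        C ^ (-(d : ℝ) / ((d : ℝ) - 1)))⁻¹ := by
  obtain ⟨hC0, hC1⟩ := hC
  have hd2 : (2 : ℝ) ≤ d := by exact_mod_cast hd
  set α : ℝ := ((d : ℝ) - 1) / d
  have hα0 : 0 < α := div_pos (by linarith) (by linarith)
  have hα1 : α ≤ 1 := div_le_one_of_le₀ (by linarith) (by linarith)
  have hexp : -(1 : ℝ) / d = α - 1 := by simp only [α]; field_simp; ring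
  have hscale : -(d : ℝ) / ((d : ℝ) - 1) = -1 / α := by rw [neg_div, neg_div, one_div_div]
  obtain ⟨hS0, hSI⟩ := tsum_prod_Icc_one_sub_div_one_add_mem_Icc hC0 hC1.le hα0 hα1
  rw [hsurv, hexp, hscale, mul_assoc]
  exact inv_one_div_add_mul_le_inv_one_add_mul_one_add hp₁.1 hp₁.2.le hS0 hSI
end

section
/- Let d ≥ 2 and C₂ ∈ (0,1). Consider the birth-death chain on ℕ absorbed at 0 with up-probability (1 + C₂ n^{−1/d})/2 from each state n ≥ 2. There exists a constant C₄ > 0 such that for all k ≥ 2, the probability that the chain started at k stays at or above k forever is at least C₄·k^{−1/d}. -/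
/-!
Each factor of the gambler's ruin product is `(1 - x)/(1 + x) ≤ exp (-x)` with
`x = C₂ n^(-a)`, `a = 1/d`, so the `ℓ`-th term is at most `exp (-C₂ ℓ (k + ℓ)^(-a))`.
For `ℓ ≤ k` this is a geometric term of ratio `exp (-C₂ (2k)^(-a))`, whose series is
`O(k^a)`; for `ℓ > k` it is at most `exp (-C₂ 2^(-a) ℓ^(1-a))`, whose series converges
to a constant independent of `k` because `a < 1`. Hence the series is `O(k^a)` and its
inverse is at least a constant times `k^(-a)`.
-/

open Real Finset Filter Topology

theorem summable_exp_neg_mul_rpow {c b : ℝ} (hc : 0 < c) (hb : 0 < b) :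
    Summable fun n : ℕ => exp (-(c * (n : ℝ) ^ b)) := by
  -- `(n^b)^(2/b) = n^2`, so eventually `exp (-c n^b) ≤ n^(-2)`
  have hlim : Tendsto (fun n : ℕ => ((n : ℝ) ^ b) ^ (2 / b) * exp (-c * (n : ℝ) ^ b))
      atTop (𝓝 0) :=
    (tendsto_rpow_mul_exp_neg_mul_atTop_nhds_zero (2 / b) c hc).comp
      ((tendsto_rpow_atTop hb).comp tendsto_natCast_atTop_atTop)
  refine Summable.of_norm_bounded_eventually_nat (summable_nat_pow_inv.2 one_lt_two) ?_
  filter_upwards [hlim.eventually (gt_mem_nhds one_pos), eventually_gt_atTop 0] with n hn hn0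
  have hn2 : ((n : ℝ) ^ b) ^ (2 / b) = (n : ℝ) ^ 2 := by
    rw [← rpow_mul n.cast_nonneg, mul_div_cancel₀ _ hb.ne', ← rpow_natCast]; norm_num
  rw [hn2, neg_mul, exp_neg, ← div_eq_mul_inv, div_lt_one (exp_pos _)] at hn
  rw [norm_of_nonneg (exp_pos _).le, exp_neg]
  exact inv_anti₀ (pow_pos (Nat.cast_pos.2 hn0) 2) hn.le

theorem summable_exp_neg_pow {x : ℝ} (hx : 0 < x) : Summable fun ℓ : ℕ => exp (-x) ^ ℓ :=
  summable_geometric_of_lt_one (exp_pos _).le (exp_lt_one_iff.2 (neg_lt_zero.2 hx))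

theorem tsum_exp_neg_pow_le {x : ℝ} (hx : 0 < x) : ∑' ℓ : ℕ, exp (-x) ^ ℓ ≤ 1 + x⁻¹ := by
  have hq : exp (-x) < 1 := exp_lt_one_iff.2 (neg_lt_zero.2 hx)
  have hexp : exp (-x) ≤ (1 + x)⁻¹ := by
    rw [exp_neg]; exact inv_anti₀ (by positivity) (by linarith [add_one_le_exp x])
  rw [tsum_geometric_of_lt_one (exp_pos _).le hq]
  have hgap : x / (1 + x) ≤ 1 - exp (-x) := by
    calc x / (1 + x) = 1 - (1 + x)⁻¹ := by field_simp; ring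
      _ ≤ 1 - exp (-x) := by linarith
  calc (1 - exp (-x))⁻¹ ≤ (x / (1 + x))⁻¹ := inv_anti₀ (by positivity) hgap
    _ = 1 + x⁻¹ := by field_simp; ring

theorem one_sub_div_one_add_le_exp_neg {x : ℝ} (hx0 : 0 ≤ x) (hx1 : x ≤ 1) :
    (1 - x) / (1 + x) ≤ exp (-x) :=
  calc (1 - x) / (1 + x) ≤ 1 - x := div_le_self (by linarith) (by linarith)
    _ ≤ exp (-x) := by linarith [add_one_le_exp (-x)]

/-- The ratio `q_n / p_n` of the down- and up-probabilities at `n` when `p_n = (1 + C n^(-a))/2`. -/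
noncomputable def ruinRatio (C a : ℝ) (n : ℕ) : ℝ :=
  (1 - C * (n : ℝ) ^ (-a)) / (1 + C * (n : ℝ) ^ (-a))

noncomputable def ruinProduct (C a : ℝ) (k ℓ : ℕ) : ℝ :=
  ∏ n ∈ Ico k (k + ℓ), ruinRatio C a n

section

variable {C a : ℝ}

theorem mul_rpow_neg_mem_Icc (hC0 : 0 ≤ C) (hC1 : C ≤ 1) (ha : 0 ≤ a) {n : ℕ} (hn : 1 ≤ n) :
    C * (n : ℝ) ^ (-a) ∈ Set.Icc 0 1 := by
  have hn' : (1 : ℝ) ≤ n := by exact_mod_cast hn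
  have hpow : (n : ℝ) ^ (-a) ≤ 1 := rpow_le_one_of_one_le_of_nonpos hn' (neg_nonpos.2 ha)
  exact ⟨by positivity, by nlinarith [rpow_nonneg (n.cast_nonneg (α := ℝ)) (-a)]⟩

theorem ruinRatio_nonneg (hC0 : 0 ≤ C) (hC1 : C ≤ 1) (ha : 0 ≤ a) {n : ℕ} (hn : 1 ≤ n) :
    0 ≤ ruinRatio C a n := by
  obtain ⟨hx0, hx1⟩ := mul_rpow_neg_mem_Icc hC0 hC1 ha hn
  exact div_nonneg (by linarith) (by linarith)

theorem ruinRatio_le_exp (hC0 : 0 ≤ C) (hC1 : C ≤ 1) (ha : 0 ≤ a) {n : ℕ} (hn : 1 ≤ n)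
    {t : ℝ} (ht : n ≤ t) : ruinRatio C a n ≤ exp (-(C * t ^ (-a))) := by
  obtain ⟨hx0, hx1⟩ := mul_rpow_neg_mem_Icc hC0 hC1 ha hn
  have hn0 : (0 : ℝ) < n := by exact_mod_cast hn
  calc ruinRatio C a n ≤ exp (-(C * (n : ℝ) ^ (-a))) := one_sub_div_one_add_le_exp_neg hx0 hx1
    _ ≤ exp (-(C * t ^ (-a))) :=
      exp_le_exp.2 <| neg_le_neg <|
        mul_le_mul_of_nonneg_left (rpow_le_rpow_of_nonpos hn0 ht (neg_nonpos.2 ha)) hC0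

theorem ruinProduct_nonneg (hC0 : 0 ≤ C) (hC1 : C ≤ 1) (ha : 0 ≤ a) {k : ℕ} (hk : 1 ≤ k)
    (ℓ : ℕ) : 0 ≤ ruinProduct C a k ℓ :=
  prod_nonneg fun _ hn => ruinRatio_nonneg hC0 hC1 ha (hk.trans (mem_Ico.1 hn).1)

theorem ruinProduct_zero (k : ℕ) : ruinProduct C a k 0 = 1 := by
  simp [ruinProduct]

theorem ruinProduct_le_exp_pow (hC0 : 0 ≤ C) (hC1 : C ≤ 1) (ha : 0 ≤ a) {k ℓ : ℕ}
    (hk : 1 ≤ k) {t : ℝ} (ht : (k + ℓ : ℝ) ≤ t) :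
    ruinProduct C a k ℓ ≤ exp (-(C * t ^ (-a))) ^ ℓ := by
  calc ruinProduct C a k ℓ ≤ ∏ _n ∈ Ico k (k + ℓ), exp (-(C * t ^ (-a))) := by
        refine prod_le_prod (fun _ hn => ruinRatio_nonneg hC0 hC1 ha (hk.trans (mem_Ico.1 hn).1))
          fun n hn => ruinRatio_le_exp hC0 hC1 ha (hk.trans (mem_Ico.1 hn).1) ?_
        have : (n : ℝ) < k + ℓ := by exact_mod_cast (mem_Ico.1 hn).2
        linarith
    _ = exp (-(C * t ^ (-a))) ^ ℓ := by simp

/-- Split at `ℓ = k`: use `k + ℓ ≤ 2k` for `ℓ ≤ k` and `k + ℓ ≤ 2ℓ` for `ℓ > k`. -/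
theorem ruinProduct_le_geometric_add (hC0 : 0 ≤ C) (hC1 : C ≤ 1) (ha : 0 ≤ a) {k : ℕ}
    (hk : 1 ≤ k) (ℓ : ℕ) :
    ruinProduct C a k ℓ ≤
      exp (-(C * (2 * k : ℝ) ^ (-a))) ^ ℓ + exp (-(C * 2 ^ (-a) * (ℓ : ℝ) ^ (1 - a))) := by
  rcases le_or_gt ℓ k with hℓk | hkℓ
  · have hle : (k + ℓ : ℝ) ≤ 2 * k := by
      have : (ℓ : ℝ) ≤ k := by exact_mod_cast hℓk
      linarith
    have := ruinProduct_le_exp_pow hC0 hC1 ha hk hle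
    linarith [exp_pos (-(C * 2 ^ (-a) * (ℓ : ℝ) ^ (1 - a)))]
  · have hle : (k + ℓ : ℝ) ≤ 2 * ℓ := by
      have : (k : ℝ) ≤ ℓ := by exact_mod_cast hkℓ.le
      linarith
    have hℓ0 : (0 : ℝ) < ℓ := Nat.cast_pos.2 (by omega)
    have hpow : exp (-(C * (2 * ℓ : ℝ) ^ (-a))) ^ ℓ =
        exp (-(C * 2 ^ (-a) * (ℓ : ℝ) ^ (1 - a))) := by
      rw [← exp_nat_mul, mul_rpow zero_le_two hℓ0.le, sub_eq_add_neg, rpow_add hℓ0, rpow_one]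
      ring_nf
    have := ruinProduct_le_exp_pow hC0 hC1 ha hk hle
    linarith [pow_nonneg (exp_pos (-(C * (2 * k : ℝ) ^ (-a)))).le ℓ]

theorem summable_ruinProduct (hC0 : 0 < C) (hC1 : C ≤ 1) (ha0 : 0 ≤ a) (ha1 : a < 1) {k : ℕ}
    (hk : 1 ≤ k) : Summable (ruinProduct C a k) := by
  have hk0 : (0 : ℝ) < k := Nat.cast_pos.2 hk
  have hgeom := summable_exp_neg_pow (by positivity : 0 < C * (2 * k : ℝ) ^ (-a))
  have htail := summable_exp_neg_mul_rpow (by positivity : 0 < C * 2 ^ (-a)) (sub_pos.2 ha1)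
  exact (hgeom.add htail).of_nonneg_of_le (ruinProduct_nonneg hC0.le hC1 ha0 hk)
    (ruinProduct_le_geometric_add hC0.le hC1 ha0 hk)

theorem tsum_ruinProduct_le (hC0 : 0 < C) (hC1 : C ≤ 1) (ha0 : 0 ≤ a) (ha1 : a < 1) {k : ℕ}
    (hk : 1 ≤ k) :
    ∑' ℓ, ruinProduct C a k ℓ ≤
      (1 + 2 ^ a / C + ∑' ℓ : ℕ, exp (-(C * 2 ^ (-a) * (ℓ : ℝ) ^ (1 - a)))) * (k : ℝ) ^ a := by
  set A := ∑' ℓ : ℕ, exp (-(C * 2 ^ (-a) * (ℓ : ℝ) ^ (1 - a)))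
  set x := C * (2 * k : ℝ) ^ (-a) with hx_def
  have hk0 : (0 : ℝ) < k := Nat.cast_pos.2 hk
  have hx : 0 < x := by positivity
  have hgeom := summable_exp_neg_pow hx
  have htail := summable_exp_neg_mul_rpow (by positivity : 0 < C * 2 ^ (-a)) (sub_pos.2 ha1)
  have hA : 0 ≤ A := tsum_nonneg fun _ => (exp_pos _).le
  have hka : 1 ≤ (k : ℝ) ^ a := one_le_rpow (by exact_mod_cast hk) ha0
  have hxinv : x⁻¹ = 2 ^ a / C * (k : ℝ) ^ a := by
    rw [hx_def, rpow_neg (by positivity), mul_rpow zero_le_two hk0.le]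
    field_simp
  calc ∑' ℓ, ruinProduct C a k ℓ
        ≤ ∑' ℓ : ℕ, (exp (-x) ^ ℓ + exp (-(C * 2 ^ (-a) * (ℓ : ℝ) ^ (1 - a)))) :=
        (summable_ruinProduct hC0 hC1 ha0 ha1 hk).tsum_le_tsum
          (ruinProduct_le_geometric_add hC0.le hC1 ha0 hk) (hgeom.add htail)
    _ = ∑' ℓ : ℕ, exp (-x) ^ ℓ + A := hgeom.tsum_add htail
    _ ≤ 1 + x⁻¹ + A := by gcongr; exact tsum_exp_neg_pow_le hx
    _ ≤ (1 + 2 ^ a / C + A) * (k : ℝ) ^ a := by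
      rw [hxinv]
      nlinarith [mul_le_mul_of_nonneg_left hka hA]

theorem one_le_tsum_ruinProduct (hC0 : 0 < C) (hC1 : C ≤ 1) (ha0 : 0 ≤ a) (ha1 : a < 1)
    {k : ℕ} (hk : 1 ≤ k) : 1 ≤ ∑' ℓ, ruinProduct C a k ℓ := by
  simpa [ruinProduct_zero] using (summable_ruinProduct hC0 hC1 ha0 ha1 hk).le_tsum 0
    fun ℓ _ => ruinProduct_nonneg hC0.le hC1 ha0 hk ℓ

end

/-- For the birth-death chain on ℕ absorbed at 0 with up-probability
`(1 + C₂ n^{−1/d})/2` from each state `n ≥ 2` (`d ≥ 2`, `C₂ ∈ (0,1)`), there is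
`C₄ > 0` such that for all `k ≥ 2` the probability (given by the generalized
gambler's ruin formula) that the chain started at `k` stays at or above `k` forever
is at least `C₄ k^{−1/d}`. -/
theorem stmt_14 (d : ℕ) (hd : 2 ≤ d) (C₂ : ℝ) (hC₂ : C₂ ∈ Set.Ioo (0 : ℝ) 1)
    (stay : ℕ → ℝ)
    (hstay : ∀ k : ℕ, 2 ≤ k → stay k = (∑' ℓ : ℕ, ∏ n ∈ Finset.Ico k (k + ℓ),
      (1 - C₂ * (n : ℝ) ^ (-(1 : ℝ) / d)) / (1 + C₂ * (n : ℝ) ^ (-(1 : ℝ) / d)))⁻¹) :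
    ∃ C₄ : ℝ, 0 < C₄ ∧ ∀ k : ℕ, 2 ≤ k → C₄ * (k : ℝ) ^ (-(1 : ℝ) / d) ≤ stay k := by
  obtain ⟨hC0, hC1⟩ := hC₂
  set a : ℝ := 1 / d
  have hd' : (2 : ℝ) ≤ d := by exact_mod_cast hd
  have ha0 : 0 ≤ a := by positivity
  have ha1 : a < 1 := (div_lt_one (by linarith)).2 (by linarith)
  set K := 1 + 2 ^ a / C₂ + ∑' ℓ : ℕ, exp (-(C₂ * 2 ^ (-a) * (ℓ : ℝ) ^ (1 - a)))
  have hK : 0 < K := by positivity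
  refine ⟨K⁻¹, inv_pos.2 hK, fun k hk => ?_⟩
  have hk1 : 1 ≤ k := by omega
  have hstay' : stay k = (∑' ℓ, ruinProduct C₂ a k ℓ)⁻¹ := by
    rw [hstay k hk]
    simp only [ruinProduct, ruinRatio, neg_div, a]
  rw [hstay', neg_div, rpow_neg (Nat.cast_nonneg k), ← mul_inv]
  exact inv_anti₀ (zero_lt_one.trans_le (one_le_tsum_ruinProduct hC0 hC1.le ha0 ha1 hk1))
    (tsum_ruinProduct_le hC0 hC1.le ha0 ha1 hk1)
end

section
/- Define K₀(d) = I(d)⁻¹·(2d²(2d+1))^{−d/(d−1)} with I(d) = ∫₀^∞ exp(−x^{(d−1)/d}) dx, and π̲₁(β) = (1/p₁ + (q₁/p₁)·I·C₂^{−d/(d−1)})⁻¹ where λ = 1+β, p₁ = 2dλ/((2d−1)+(2d+1)λ), q₁ = 1−p₁, and C₂ = (λ−1)/(d(2d+1)(1+(2d−1)λ)). Then π̲₁(β) ∼ K₀(d)·β^{d/(d−1)} as β → 0. -/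
open Filter MeasureTheory Topology

/-!
Write `α = d/(d-1)`, `M = 2d²(2d+1)` and `K₀ = I⁻¹ M^{-α}`. Multiplying out,
`π̲₁(β) / (K₀ β^α) = (K₀ β^α / p₁ + (q₁/p₁) ((β/C₂)/M)^α)⁻¹`. As `β → 0⁺` we have `p₁ → 1/2`,
so `q₁/p₁ → 1`, and `β/C₂ → d(2d+1)·2d = M`, so the second term tends to `1` while the first
tends to `0`. The cancellation of `I` against `I⁻¹` uses `I = Γ(d/(d-1) + 1) > 0`.
-/

lemma lowerBound_div_eq {α I M β p C : ℝ} (hI : I ≠ 0) (hM : 0 < M) (hβ : 0 < β) (hC : 0 < C) :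
    (1 / p + (1 - p) / p * I * C ^ (-α))⁻¹ / (I⁻¹ * M ^ (-α) * β ^ α) =
      (I⁻¹ * M ^ (-α) * β ^ α / p + (1 - p) / p * (β / C / M) ^ α)⁻¹ := by
  rw [div_eq_mul_inv, ← mul_inv, Real.div_rpow (div_pos hβ hC).le hM.le,
    Real.div_rpow hβ.le hC.le, Real.rpow_neg hC.le, Real.rpow_neg hM.le]
  field_simp

theorem tendsto_lowerBound_div_rpow {α I M p₀ : ℝ} {p C : ℝ → ℝ} (hα : 0 < α) (hI : I ≠ 0)
    (hM : 0 < M) (hp₀ : p₀ ≠ 0) (hp₀' : p₀ ≠ 1) (hp : Tendsto p (𝓝[>] 0) (𝓝 p₀))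
    (hC : Tendsto (fun β => β / C β) (𝓝[>] 0) (𝓝 M)) :
    Tendsto (fun β => (1 / p β + (1 - p β) / p β * I * C β ^ (-α))⁻¹ /
      (I⁻¹ * M ^ (-α) * β ^ α)) (𝓝[>] 0) (𝓝 (p₀ / (1 - p₀))) := by
  have hβα : Tendsto (fun β : ℝ => β ^ α) (𝓝[>] 0) (𝓝 0) := by
    simpa [Real.zero_rpow hα.ne'] using
      (Real.continuousAt_rpow_const 0 α (Or.inr hα.le)).tendsto.mono_left nhdsWithin_le_nhds
  have hfirst : Tendsto (fun β => I⁻¹ * M ^ (-α) * β ^ α / p β) (𝓝[>] 0) (𝓝 0) := by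
    have h := (hβα.const_mul (I⁻¹ * M ^ (-α))).div hp hp₀
    rwa [mul_zero, zero_div] at h
  have hsecond : Tendsto (fun β => (1 - p β) / p β * (β / C β / M) ^ α) (𝓝[>] 0)
      (𝓝 ((1 - p₀) / p₀)) := by
    have hratio : Tendsto (fun β => (β / C β / M) ^ α) (𝓝[>] 0) (𝓝 1) := by
      simpa [hM.ne'] using
        ((hC.div_const M).rpow_const (p := α) (Or.inl (by simp [hM.ne'])))
    simpa using ((tendsto_const_nhds.sub hp).div hp hp₀).mul hratio
  have hlim := (hfirst.add hsecond).inv₀ (by simp [hp₀, sub_ne_zero.2 hp₀'.symm])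
  rw [zero_add, inv_div] at hlim
  refine hlim.congr' ?_
  filter_upwards [self_mem_nhdsWithin, hC.eventually (lt_mem_nhds hM)] with β hβ hβC
  have hCβ : 0 < C β := by
    by_contra! h
    exact (div_nonpos_of_nonneg_of_nonpos hβ.le h).not_gt hβC
  exact (lowerBound_div_eq hI hM hβ hCβ).symm

/-- With `I(d) = ∫₀^∞ exp(−x^{(d−1)/d}) dx`, `K₀(d) = I(d)⁻¹ (2d²(2d+1))^{−d/(d−1)}`,
`λ = 1+β`, `p₁ = 2dλ/((2d−1)+(2d+1)λ)`, `q₁ = 1−p₁`,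
`C₂ = (λ−1)/(d(2d+1)(1+(2d−1)λ))`, the lower bound
`π̲₁(β) = (1/p₁ + (q₁/p₁)·I·C₂^{−d/(d−1)})⁻¹` satisfies
`π̲₁(β) ∼ K₀(d)·β^{d/(d−1)}` as `β → 0⁺`. -/
theorem stmt_16 (d : ℕ) (hd : 2 ≤ d)
    (I K₀ : ℝ) (p₁ C₂ π₁ : ℝ → ℝ)
    (hI : I = ∫ x in Set.Ioi (0 : ℝ), Real.exp (-(x ^ (((d : ℝ) - 1) / d))))
    (hK₀ : K₀ = I⁻¹ * (2 * (d : ℝ) ^ 2 * (2 * (d : ℝ) + 1)) ^ (-(d : ℝ) / ((d : ℝ) - 1)))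
    (hp₁ : ∀ β, p₁ β =
      2 * (d : ℝ) * (1 + β) / ((2 * (d : ℝ) - 1) + (2 * (d : ℝ) + 1) * (1 + β)))
    (hC₂ : ∀ β, C₂ β =
      β / ((d : ℝ) * (2 * (d : ℝ) + 1) * (1 + (2 * (d : ℝ) - 1) * (1 + β))))
    (hπ₁ : ∀ β, π₁ β =
      (1 / p₁ β + ((1 - p₁ β) / p₁ β) * I * (C₂ β) ^ (-(d : ℝ) / ((d : ℝ) - 1)))⁻¹) :
    Tendsto (fun β : ℝ => π₁ β / (K₀ * β ^ ((d : ℝ) / ((d : ℝ) - 1))))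
      (nhdsWithin 0 (Set.Ioi 0)) (nhds 1) := by
  have hd2 : (2 : ℝ) ≤ d := by exact_mod_cast hd
  have hα : 0 < (d : ℝ) / (d - 1) := div_pos (by linarith) (by linarith)
  have hI_pos : 0 < I := by
    have hexp : 0 < ((d : ℝ) - 1) / d := div_pos (by linarith) (by linarith)
    rw [hI, integral_exp_neg_rpow hexp]
    exact Real.Gamma_pos_of_pos (by positivity)
  have hp : Tendsto p₁ (𝓝[>] 0) (𝓝 (1 / 2)) := by
    have hcont : ContinuousAt p₁ 0 := by
      rw [funext hp₁]
      exact ContinuousAt.div (by fun_prop) (by fun_prop) (by norm_num; linarith)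
    have hval : p₁ 0 = 1 / 2 := by
      rw [hp₁]; field_simp; ring
    exact hval ▸ hcont.tendsto.mono_left nhdsWithin_le_nhds
  have hC : Tendsto (fun β => β / C₂ β) (𝓝[>] 0) (𝓝 (2 * (d : ℝ) ^ 2 * (2 * d + 1))) := by
    have hcont : Continuous fun β : ℝ => (d : ℝ) * (2 * d + 1) * (1 + (2 * d - 1) * (1 + β)) :=
      by fun_prop
    refine ((hcont.tendsto' 0 _ (by ring)).mono_left nhdsWithin_le_nhds).congr' ?_
    filter_upwards [self_mem_nhdsWithin] with β (hβ : 0 < β)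
    rw [hC₂, div_div_eq_mul_div, mul_div_cancel_left₀ _ hβ.ne']
  have key := tendsto_lowerBound_div_rpow hα hI_pos.ne' (by positivity) (by norm_num)
    (by norm_num) hp hC
  simp_rw [hπ₁, hK₀, neg_div]
  convert key using 2
  norm_num
end

section
/- For λ > 1, the function g(λ) = (λ+1)(λ−1)/(λ²+2λ−1), expressed as a proportion r(λ) = g(λ)/((λ−1)/λ) = λ(λ+1)/(λ²+2λ−1) of the biased voter survival probability, satisfies: r(λ) < 1 for all λ > 1, r(λ) → 1 as λ → 1⁺ and as λ → ∞, and r attains its minimum value (2+√2)/4 at λ = 1+√2. -/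
open Filter

/-!
Everything follows from two identities for the denominator `D(λ) = λ² + 2λ − 1`, positive on
`(1, ∞)`: `1 − r(λ) = (λ − 1)/D(λ)` gives `r < 1`, and
`4λ(λ + 1) − (2 + √2) D(λ) = (2 − √2)(λ − 1 − √2)²` (a quadratic with vanishing discriminant)
gives the minimum. Near `∞`, `r(λ) = (1 + t)/(1 + 2t − t²)` with `t = 1/λ → 0`.
-/

noncomputable section

/-- `r(λ)`, the BD^f survival probability as a proportion of the biased voter one. -/
def bdfRatio (lam : ℝ) : ℝ := lam * (lam + 1) / (lam ^ 2 + 2 * lam - 1)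

lemma denom_pos_of_one_lt {lam : ℝ} (h : 1 < lam) : 0 < lam ^ 2 + 2 * lam - 1 := by
  nlinarith

lemma bdfSurvival_div_voterSurvival {lam : ℝ} (h : lam ≠ 1) :
    ((lam + 1) * (lam - 1) / (lam ^ 2 + 2 * lam - 1)) / ((lam - 1) / lam) = bdfRatio lam := by
  have h1 : lam - 1 ≠ 0 := sub_ne_zero.mpr h
  rw [bdfRatio, div_div_eq_mul_div, div_eq_iff h1]
  ring

lemma one_sub_bdfRatio {lam : ℝ} (h : lam ^ 2 + 2 * lam - 1 ≠ 0) :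
    1 - bdfRatio lam = (lam - 1) / (lam ^ 2 + 2 * lam - 1) := by
  rw [bdfRatio, eq_div_iff h, sub_mul, div_mul_cancel₀ _ h]
  ring

lemma bdfRatio_lt_one {lam : ℝ} (h : 1 < lam) : bdfRatio lam < 1 := by
  have hD := denom_pos_of_one_lt h
  rw [← sub_pos, one_sub_bdfRatio hD.ne']
  exact div_pos (sub_pos.mpr h) hD

lemma bdfRatio_sub_min {lam : ℝ} (h : lam ^ 2 + 2 * lam - 1 ≠ 0) :
    bdfRatio lam - (2 + Real.sqrt 2) / 4 =
      (2 - Real.sqrt 2) * (lam - 1 - Real.sqrt 2) ^ 2 / (4 * (lam ^ 2 + 2 * lam - 1)) := by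
  have h2 : Real.sqrt 2 ^ 2 = 2 := Real.sq_sqrt (by norm_num)
  rw [bdfRatio, div_sub_div _ _ h four_ne_zero, mul_comm (lam ^ 2 + 2 * lam - 1) 4]
  congr 1
  linear_combination (Real.sqrt 2 - 2 * lam) * h2

lemma one_lt_one_add_sqrt_two : 1 < 1 + Real.sqrt 2 :=
  lt_add_of_pos_right 1 (Real.sqrt_pos.mpr two_pos)

lemma bdfRatio_one_add_sqrt_two : bdfRatio (1 + Real.sqrt 2) = (2 + Real.sqrt 2) / 4 := by
  have h := bdfRatio_sub_min (denom_pos_of_one_lt one_lt_one_add_sqrt_two).ne'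
  rwa [add_sub_cancel_left, sub_self, zero_pow two_ne_zero, mul_zero, zero_div, sub_eq_zero] at h

lemma min_le_bdfRatio {lam : ℝ} (h : 1 < lam) : (2 + Real.sqrt 2) / 4 ≤ bdfRatio lam := by
  have hD := denom_pos_of_one_lt h
  have hsqrt : Real.sqrt 2 < 2 := by
    rw [Real.sqrt_lt' (by norm_num)]
    norm_num
  rw [← sub_nonneg, bdfRatio_sub_min hD.ne']
  have : 0 ≤ 2 - Real.sqrt 2 := by linarith
  positivity

lemma tendsto_bdfRatio_one : Tendsto bdfRatio (nhds 1) (nhds 1) := by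
  have hc : ContinuousAt bdfRatio 1 := by
    unfold bdfRatio
    exact ContinuousAt.div (by fun_prop) (by fun_prop) (by norm_num)
  simpa [bdfRatio] using hc.tendsto

lemma bdfRatio_eq_of_inv {lam : ℝ} (h : lam ≠ 0) :
    bdfRatio lam = (1 + lam⁻¹) / (1 + 2 * lam⁻¹ - lam⁻¹ ^ 2) := by
  rw [bdfRatio, ← mul_div_mul_left _ _ (pow_ne_zero 2 (inv_ne_zero h))]
  congr 1 <;> field_simp

lemma tendsto_bdfRatio_atTop : Tendsto bdfRatio atTop (nhds 1) := by
  have hc : ContinuousAt (fun t : ℝ => (1 + t) / (1 + 2 * t - t ^ 2)) 0 :=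
    ContinuousAt.div (by fun_prop) (by fun_prop) (by norm_num)
  have hlim :
      Tendsto (fun lam : ℝ => (1 + lam⁻¹) / (1 + 2 * lam⁻¹ - lam⁻¹ ^ 2)) atTop (nhds 1) := by
    convert hc.tendsto.comp tendsto_inv_atTop_zero using 2 <;> norm_num
  refine hlim.congr' ?_
  filter_upwards [eventually_ne_atTop 0] with lam h
  exact (bdfRatio_eq_of_inv h).symm

end

/-- The survival probability `g(λ) = (λ+1)(λ−1)/(λ²+2λ−1)` of the one-dimensional
BD^f model, as a proportion `r(λ) = g(λ)/((λ−1)/λ) = λ(λ+1)/(λ²+2λ−1)` of the biased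
voter survival probability, satisfies `r < 1` on `(1,∞)`, `r → 1` as `λ → 1⁺` and as
`λ → ∞`, and attains its minimum value `(2+√2)/4` at `λ = 1+√2`. -/
theorem stmt_18 :
    (∀ lam : ℝ, 1 < lam →
      ((lam + 1) * (lam - 1) / (lam ^ 2 + 2 * lam - 1)) / ((lam - 1) / lam) =
        lam * (lam + 1) / (lam ^ 2 + 2 * lam - 1)) ∧
    (∀ lam : ℝ, 1 < lam → lam * (lam + 1) / (lam ^ 2 + 2 * lam - 1) < 1) ∧
    Tendsto (fun lam : ℝ => lam * (lam + 1) / (lam ^ 2 + 2 * lam - 1))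
      (nhdsWithin 1 (Set.Ioi 1)) (nhds 1) ∧
    Tendsto (fun lam : ℝ => lam * (lam + 1) / (lam ^ 2 + 2 * lam - 1))
      atTop (nhds 1) ∧
    (1 + Real.sqrt 2) * ((1 + Real.sqrt 2) + 1) /
        ((1 + Real.sqrt 2) ^ 2 + 2 * (1 + Real.sqrt 2) - 1) = (2 + Real.sqrt 2) / 4 ∧
    (∀ lam : ℝ, 1 < lam →
      (2 + Real.sqrt 2) / 4 ≤ lam * (lam + 1) / (lam ^ 2 + 2 * lam - 1)) :=
  ⟨fun _ h => bdfSurvival_div_voterSurvival h.ne',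
    fun _ => bdfRatio_lt_one,
    tendsto_bdfRatio_one.mono_left nhdsWithin_le_nhds,
    tendsto_bdfRatio_atTop,
    bdfRatio_one_add_sqrt_two,
    fun _ => min_le_bdfRatio⟩
end
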